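/- arXiv:2304.11950 — 8 statements merged into one kernel-verified Lean document; each statement's English description precedes it below -/
import Mathlib

section
/- Let p ≥ 1 and ℓ be integers with 0 ≤ ℓ ≤ p−1, and let A, B be real constants. Then the function a : (−1,1) → ℝ given by a(τ) = A·((1−τ)/2)^p · J_ℓ^{(p,−p)}(τ) + B·((1+τ)/2)^p · J_ℓ^{(−p,p)}(τ) satisfies the ordinary differential equation (1−τ²)·a''(τ) + 2τ(p−1)·a'(τ) + (ℓ+p)(ℓ−p+1)·a(τ) = 0 for all τ ∈ (−1,1). -/
noncomputable section

open Polynomial Finset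

/-- Generalized binomial coefficient `C(r,k) = r(r-1)⋯(r-k+1)/k!` for integer `r`. -/
def gbinom (r : ℤ) (k : ℕ) : ℝ :=
  (∏ i ∈ Finset.range k, ((r : ℝ) - (i : ℝ))) / (Nat.factorial k : ℝ)

/-- Jacobi polynomial `J_n^{(α,β)}` for integer parameters, with `J_n = 0` for `n < 0`. -/
def jacobiJ (n α β : ℤ) (x : ℝ) : ℝ :=
  if n < 0 then 0
  else ∑ s ∈ Finset.range (n.toNat + 1),
    gbinom (n + α) (n.toNat - s) * gbinom (n + β) s *
      ((x - 1) / 2) ^ s * ((x + 1) / 2) ^ (n.toNat - s)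

lemma gbinom_zero (r : ℤ) : gbinom r 0 = 1 := by simp [gbinom]
lemma gbinom_one (r : ℤ) : gbinom r 1 = (r : ℝ) := by simp [gbinom]

lemma gbinom_succ (r : ℤ) (k : ℕ) :
    ((k:ℝ)+1) * gbinom r (k+1) = ((r:ℝ) - k) * gbinom r k := by
  unfold gbinom
  rw [Finset.prod_range_succ, Nat.factorial_succ]
  have h1 : (Nat.factorial k : ℝ) ≠ 0 := by positivity
  have h2 : ((k:ℝ)+1) ≠ 0 := by positivity
  push_cast
  field_simp

def gbinomZ (r k : ℤ) : ℝ := if 0 ≤ k then gbinom r k.toNat else 0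

lemma gbinomZ_neg (r : ℤ) {k : ℤ} (h : k < 0) : gbinomZ r k = 0 := by
  simp [gbinomZ, not_le.2 h]

lemma gbinomZ_coe (r : ℤ) (k : ℕ) : gbinomZ r (k : ℤ) = gbinom r k := by
  simp [gbinomZ]

def c0 (p ℓ : ℕ) (t : ℤ) : ℝ := gbinomZ ((ℓ:ℤ)+p) ((ℓ:ℤ)+p-t) * gbinomZ ((ℓ:ℤ)-p) (t-p)

lemma c0_rec (p ℓ : ℕ) (hp : 1 ≤ p) (hl : ℓ+1 ≤ p) (t : ℤ) :
    ((t:ℝ)+1)*((p:ℝ)-((t:ℝ)+1)) * c0 p ℓ (t+1)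
      + (-2*(t:ℝ)*(((ℓ+p:ℕ):ℝ)-(t:ℝ)) + ((p:ℝ)-1)*((ℓ+p:ℕ):ℝ)
          + ((ℓ:ℝ)+(p:ℝ))*((ℓ:ℝ)-(p:ℝ)+1)) * c0 p ℓ t
      + ((((ℓ+p:ℕ):ℝ)-(t:ℝ)+1)*((p:ℝ)-((ℓ+p:ℕ):ℝ)+(t:ℝ)-1)) * c0 p ℓ (t-1) = 0 := by
  rcases lt_or_ge t (p:ℤ) with h | h
  · -- t < p : c0 t = c0 (t-1) = 0
    have e0 : c0 p ℓ t = 0 := by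
      unfold c0; rw [gbinomZ_neg _ (by omega : t - (p:ℤ) < 0)]; ring
    have e1 : c0 p ℓ (t-1) = 0 := by
      unfold c0; rw [gbinomZ_neg _ (by omega : t - 1 - (p:ℤ) < 0)]; ring
    rcases eq_or_lt_of_le (by omega : t + 1 ≤ (p:ℤ)) with he | hlt
    · have hcoef : (p:ℝ) - ((t:ℝ)+1) = 0 := by
        have h' : ((t:ℝ)+1) = ((p:ℕ):ℝ) := by exact_mod_cast he
        linarith
      rw [e0, e1, hcoef]; ring
    · have e2 : c0 p ℓ (t+1) = 0 := by
        unfold c0; rw [gbinomZ_neg _ (by omega : t + 1 - (p:ℤ) < 0)]; ring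
      rw [e0, e1, e2]; ring
  · rcases lt_or_ge ((ℓ:ℤ)+p) t with h2 | h2
    · -- t > ℓ+p : c0 t = c0 (t+1) = 0
      have e0 : c0 p ℓ t = 0 := by
        unfold c0; rw [gbinomZ_neg _ (by omega : (ℓ:ℤ)+p - t < 0)]; ring
      have e2 : c0 p ℓ (t+1) = 0 := by
        unfold c0; rw [gbinomZ_neg _ (by omega : (ℓ:ℤ)+p - (t+1) < 0)]; ring
      rcases eq_or_lt_of_le (by omega : (ℓ:ℤ)+p+1 ≤ t) with he | hlt
      · -- t = ℓ+p+1 : coefficient on c0 (t-1) vanishes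
        have hcoef : ((ℓ+p:ℕ):ℝ)-(t:ℝ)+1 = 0 := by
          have h' : ((ℓ:ℝ)+(p:ℝ)+1) = (t:ℝ) := by exact_mod_cast he
          push_cast
          linarith
        rw [e0, e2, hcoef]; ring
      · have e1 : c0 p ℓ (t-1) = 0 := by
          unfold c0; rw [gbinomZ_neg _ (by omega : (ℓ:ℤ)+p - (t-1) < 0)]; ring
        rw [e0, e1, e2]; ring
    · -- main case : p ≤ t ≤ ℓ+p
      obtain ⟨s, hs, hsl⟩ : ∃ s : ℕ, t = (p:ℤ) + s ∧ s ≤ ℓ := ⟨(t - p).toNat, by omega, by omega⟩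
      subst hs
      have e0 : c0 p ℓ ((p:ℤ)+s) = gbinom ((ℓ:ℤ)+p) (ℓ-s) * gbinom ((ℓ:ℤ)-p) s := by
        unfold c0
        rw [show (ℓ:ℤ)+p-((p:ℤ)+s) = ((ℓ-s:ℕ):ℤ) by omega,
            show (p:ℤ)+s-p = ((s:ℕ):ℤ) by omega, gbinomZ_coe, gbinomZ_coe]
      rcases Nat.eq_zero_or_pos s with hs0 | hs1
      · subst hs0
        rcases Nat.eq_zero_or_pos ℓ with hl0 | hl1
        · -- s = 0, ℓ = 0
          have e1 : c0 p ℓ ((p:ℤ)+(0:ℕ)+1) = 0 := by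
            unfold c0; rw [gbinomZ_neg _ (by omega : (ℓ:ℤ)+p-((p:ℤ)+(0:ℕ)+1) < 0)]; ring
          have e2 : c0 p ℓ ((p:ℤ)+(0:ℕ)-1) = 0 := by
            unfold c0; rw [gbinomZ_neg _ (by omega : (p:ℤ)+(0:ℕ)-1-p < 0)]; ring
          rw [e1, e2, e0, hl0]
          push_cast [hl0]
          ring
        · -- s = 0 < ℓ
          obtain ⟨j, hj⟩ : ∃ j, ℓ = j+1 := ⟨ℓ-1, by omega⟩
          subst hj
          have e2 : c0 p (j+1) ((p:ℤ)+(0:ℕ)-1) = 0 := by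
            unfold c0; rw [gbinomZ_neg _ (by omega : (p:ℤ)+(0:ℕ)-1-p < 0)]; ring
          have e1 : c0 p (j+1) ((p:ℤ)+(0:ℕ)+1) = gbinom (((j:ℤ)+1)+p) j * gbinom (((j:ℤ)+1)-p) 1 := by
            unfold c0
            rw [show ((j+1:ℕ):ℤ)+p-((p:ℤ)+(0:ℕ)+1) = ((j:ℕ):ℤ) by omega,
                show (p:ℤ)+(0:ℕ)+1-p = ((1:ℕ):ℤ) by omega, gbinomZ_coe, gbinomZ_coe]
            push_cast
            ring_nf
          rw [e1, e2, e0, show (j+1)-(0:ℕ) = j+1 from rfl, gbinom_one, gbinom_zero]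
          have r1 := gbinom_succ (((j+1:ℕ):ℤ)+p) j
          push_cast at r1 ⊢
          have hne : (j:ℝ)+1+(p:ℝ)-(j:ℝ) ≠ 0 := by
            have hp' : (1:ℝ) ≤ (p:ℝ) := by exact_mod_cast hp
            intro hcon; linarith
          have hG : gbinom ((j:ℤ)+1+(p:ℤ)) j
              = ((j:ℝ)+1) / ((j:ℝ)+1+(p:ℝ)-(j:ℝ)) * gbinom ((j:ℤ)+1+(p:ℤ)) (j+1) := by
            field_simp
            linarith [r1]
          rw [hG]
          field_simp
          ring
      · rcases eq_or_lt_of_le hsl with hsl' | hsl'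
        · -- s = ℓ ≥ 1
          subst hsl'
          obtain ⟨m, hm⟩ : ∃ m, s = m+1 := ⟨s-1, by omega⟩
          subst hm
          have e1 : c0 p (m+1) ((p:ℤ)+(m+1:ℕ)+1) = 0 := by
            unfold c0
            rw [gbinomZ_neg _ (by omega : ((m+1:ℕ):ℤ)+p-((p:ℤ)+(m+1:ℕ)+1) < 0)]; ring
          have e2 : c0 p (m+1) ((p:ℤ)+(m+1:ℕ)-1)
              = gbinom (((m+1:ℕ):ℤ)+p) 1 * gbinom (((m+1:ℕ):ℤ)-p) m := by
            unfold c0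
            rw [show ((m+1:ℕ):ℤ)+p-((p:ℤ)+(m+1:ℕ)-1) = ((1:ℕ):ℤ) by omega,
                show (p:ℤ)+(m+1:ℕ)-1-p = ((m:ℕ):ℤ) by omega, gbinomZ_coe, gbinomZ_coe]
          have r3 := gbinom_succ (((m+1:ℕ):ℤ)-p) m
          push_cast at r3
          have hp2 : (m:ℝ)+2 ≤ (p:ℝ) := by exact_mod_cast hl
          rw [e1, e2, e0, show (m+1)-(m+1) = 0 by omega, gbinom_zero, gbinom_one]
          push_cast
          have hne0 : (m:ℝ)+1 ≠ 0 := by positivity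
          have hH : gbinom ((m:ℤ)+1-(p:ℤ)) (m+1)
              = ((m:ℝ)+1-(p:ℝ)-(m:ℝ))/((m:ℝ)+1) * gbinom ((m:ℤ)+1-(p:ℤ)) m := by
            field_simp
            linarith [r3]
          rw [hH]
          field_simp
          ring
        · -- 1 ≤ s < ℓ generic case
          obtain ⟨j, hj⟩ : ∃ j, ℓ = s+j+1 := ⟨ℓ-s-1, by omega⟩
          subst hj
          obtain ⟨m, hm⟩ : ∃ m, s = m+1 := ⟨s-1, by omega⟩
          subst hm
          have e1 : c0 p (m+1+j+1) ((p:ℤ)+(m+1:ℕ)+1)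
              = gbinom (((m+1+j+1:ℕ):ℤ)+(p:ℤ)) j * gbinom (((m+1+j+1:ℕ):ℤ)-(p:ℤ)) (m+2) := by
            unfold c0
            rw [show ((m+1+j+1:ℕ):ℤ)+(p:ℤ)-((p:ℤ)+(m+1:ℕ)+1) = ((j:ℕ):ℤ) by omega,
                show (p:ℤ)+(m+1:ℕ)+1-(p:ℤ) = ((m+2:ℕ):ℤ) by omega, gbinomZ_coe, gbinomZ_coe]
          have e2 : c0 p (m+1+j+1) ((p:ℤ)+(m+1:ℕ)-1)
              = gbinom (((m+1+j+1:ℕ):ℤ)+(p:ℤ)) (j+2) * gbinom (((m+1+j+1:ℕ):ℤ)-(p:ℤ)) m := by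
            unfold c0
            rw [show ((m+1+j+1:ℕ):ℤ)+(p:ℤ)-((p:ℤ)+(m+1:ℕ)-1) = ((j+2:ℕ):ℤ) by omega,
                show (p:ℤ)+(m+1:ℕ)-1-(p:ℤ) = ((m:ℕ):ℤ) by omega, gbinomZ_coe, gbinomZ_coe]
          have r1 := gbinom_succ (((m+1+j+1:ℕ):ℤ)+(p:ℤ)) j
          have r2 := gbinom_succ (((m+1+j+1:ℕ):ℤ)+(p:ℤ)) (j+1)
          have r3 := gbinom_succ (((m+1+j+1:ℕ):ℤ)-(p:ℤ)) m
          have r4 := gbinom_succ (((m+1+j+1:ℕ):ℤ)-(p:ℤ)) (m+1)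
          push_cast at r1 r2 r3 r4
          have hpl : (m:ℝ)+1+(j:ℝ)+1+1 ≤ (p:ℝ) := by exact_mod_cast hl
          have hm0 : (0:ℝ) ≤ (m:ℝ) := Nat.cast_nonneg m
          have hj0 : (0:ℝ) ≤ (j:ℝ) := Nat.cast_nonneg j
          have hp0 : (0:ℝ) ≤ (p:ℝ) := Nat.cast_nonneg p
          rw [e1, e2, e0, show m+1+j+1-(m+1) = j+1 by omega]
          push_cast
          have hne1 : (m:ℝ)+1+(j:ℝ)+1+(p:ℝ)-(j:ℝ) ≠ 0 := by intro hcon; linarith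
          have hne3 : (m:ℝ)+1+(j:ℝ)+1-(p:ℝ)-(m:ℝ) ≠ 0 := by intro hcon; linarith
          have hnj2 : (j:ℝ)+1+1 ≠ 0 := by positivity
          have hnm2 : (m:ℝ)+1+1 ≠ 0 := by positivity
          have hG1 : gbinom ((m:ℤ)+1+(j:ℤ)+1+(p:ℤ)) j
              = ((j:ℝ)+1)/((m:ℝ)+1+(j:ℝ)+1+(p:ℝ)-(j:ℝ)) * gbinom ((m:ℤ)+1+(j:ℤ)+1+(p:ℤ)) (j+1) := by
            field_simp
            linarith [r1]
          have hG2 : gbinom ((m:ℤ)+1+(j:ℤ)+1+(p:ℤ)) (j+2)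
              = ((m:ℝ)+1+(j:ℝ)+1+(p:ℝ)-((j:ℝ)+1))/((j:ℝ)+1+1) * gbinom ((m:ℤ)+1+(j:ℤ)+1+(p:ℤ)) (j+1) := by
            rw [show j+2 = j+1+1 from rfl]
            field_simp
            linarith [r2]
          have hH1 : gbinom ((m:ℤ)+1+(j:ℤ)+1-(p:ℤ)) m
              = ((m:ℝ)+1)/((m:ℝ)+1+(j:ℝ)+1-(p:ℝ)-(m:ℝ)) * gbinom ((m:ℤ)+1+(j:ℤ)+1-(p:ℤ)) (m+1) := by
            field_simp
            linarith [r3]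
          have hH2 : gbinom ((m:ℤ)+1+(j:ℤ)+1-(p:ℤ)) (m+2)
              = ((m:ℝ)+1+(j:ℝ)+1-(p:ℝ)-((m:ℝ)+1))/((m:ℝ)+1+1) * gbinom ((m:ℤ)+1+(j:ℤ)+1-(p:ℤ)) (m+1) := by
            rw [show m+2 = m+1+1 from rfl]
            field_simp
            linarith [r4]
          rw [hG1, hG2, hH1, hH2]
          field_simp
          ring

lemma term_eval (q lam : ℝ) (t k : ℕ) (c x : ℝ) :
    (1 - x^2) * (derivative (derivative (C c * ((X:ℝ[X]) - 1)^t * ((X:ℝ[X]) + 1)^k))).eval x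
      + 2*x*(q-1) * (derivative (C c * ((X:ℝ[X]) - 1)^t * ((X:ℝ[X]) + 1)^k)).eval x
      + lam * (C c * ((X:ℝ[X]) - 1)^t * ((X:ℝ[X]) + 1)^k).eval x
    = c * ((t:ℝ)*(q-(t:ℝ))) * (x-1)^(t-1) * (x+1)^(k+1)
      + c * (-2*(t:ℝ)*(k:ℝ) + (q-1)*((t:ℝ)+(k:ℝ)) + lam) * (x-1)^t * (x+1)^k
      + c * ((k:ℝ)*(q-(k:ℝ))) * (x-1)^(t+1) * (x+1)^(k-1) := by
  rcases t with _ | t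
  · rcases k with _ | k
    · simp; ring
    · rcases k with _ | k
      · simp [derivative_mul]; ring
      · simp [derivative_mul, derivative_pow, Nat.succ_sub_one]
        push_cast
        ring
  · rcases t with _ | t
    · rcases k with _ | k
      · simp [derivative_mul]; ring
      · rcases k with _ | k
        · simp [derivative_mul, derivative_pow, Nat.succ_sub_one]; push_cast; ring
        · simp [derivative_mul, derivative_pow, Nat.succ_sub_one]; push_cast; ring
    · rcases k with _ | k
      · simp [derivative_mul, derivative_pow, Nat.succ_sub_one]; push_cast; ring
      · rcases k with _ | k
        · simp [derivative_mul, derivative_pow, Nat.succ_sub_one]; push_cast; ring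
        · simp [derivative_mul, derivative_pow, Nat.succ_sub_one]; push_cast; ring

lemma sum_solves (q lam : ℝ) (N : ℕ) (d : ℤ → ℝ)
    (hd0 : d (-1) = 0) (hdN : d ((N:ℤ)+1) = 0)
    (hrec : ∀ t : ℤ, ((t:ℝ)+1)*(q-((t:ℝ)+1)) * d (t+1)
      + (-2*(t:ℝ)*((N:ℝ)-(t:ℝ)) + (q-1)*(N:ℝ) + lam) * d t
      + (((N:ℝ)-(t:ℝ)+1)*(q-(N:ℝ)+(t:ℝ)-1)) * d (t-1) = 0)
    (x : ℝ) :
    (1 - x^2) * (derivative (derivative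
        (∑ t ∈ range (N+1), C (d t) * ((X:ℝ[X]) - 1)^t * ((X:ℝ[X]) + 1)^(N-t)))).eval x
      + 2*x*(q-1) * (derivative
        (∑ t ∈ range (N+1), C (d t) * ((X:ℝ[X]) - 1)^t * ((X:ℝ[X]) + 1)^(N-t))).eval x
      + lam * (∑ t ∈ range (N+1), C (d t) * ((X:ℝ[X]) - 1)^t * ((X:ℝ[X]) + 1)^(N-t)).eval x
      = 0 := by
  rw [derivative_sum, derivative_sum, eval_finset_sum, eval_finset_sum, eval_finset_sum,
    mul_sum, mul_sum, mul_sum, ← sum_add_distrib, ← sum_add_distrib]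
  have step2 : ∀ t ∈ range (N+1),
      (1 - x^2) * (derivative (derivative (C (d t) * ((X:ℝ[X]) - 1)^t * ((X:ℝ[X]) + 1)^(N-t)))).eval x
        + 2*x*(q-1) * (derivative (C (d t) * ((X:ℝ[X]) - 1)^t * ((X:ℝ[X]) + 1)^(N-t))).eval x
        + lam * (C (d t) * ((X:ℝ[X]) - 1)^t * ((X:ℝ[X]) + 1)^(N-t)).eval x
      = d t * ((t:ℝ)*(q-(t:ℝ))) * (x-1)^(t-1) * (x+1)^(N-t+1)
        + d t * (-2*(t:ℝ)*((N:ℝ)-(t:ℝ)) + (q-1)*(N:ℝ) + lam) * (x-1)^t * (x+1)^(N-t)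
        + d t * (((N:ℝ)-(t:ℝ))*(q-((N:ℝ)-(t:ℝ)))) * (x-1)^(t+1) * (x+1)^(N-t-1) := by
    intro t ht
    have htN : t ≤ N := by simpa [Nat.lt_succ_iff] using ht
    have hc : ((N - t : ℕ) : ℝ) = (N:ℝ) - (t:ℝ) := by
      push_cast [htN]; ring
    rw [term_eval q lam t (N-t) (d t) x, hc]
    have hc2 : (t:ℝ) + ((N:ℝ) - (t:ℝ)) = (N:ℝ) := by ring
    rw [hc2]
  rw [sum_congr rfl step2]
  rw [sum_add_distrib, sum_add_distrib]
  have stepA : (∑ t ∈ range (N+1),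
        d t * ((t:ℝ)*(q-(t:ℝ))) * (x-1)^(t-1) * (x+1)^(N-t+1))
      = ∑ t ∈ range (N+1),
        d ((t:ℤ)+1) * (((t:ℝ)+1)*(q-((t:ℝ)+1))) * (x-1)^t * (x+1)^(N-t) := by
    rw [Finset.sum_range_succ' (fun t => d t * ((t:ℝ)*(q-(t:ℝ))) * (x-1)^(t-1) * (x+1)^(N-t+1)),
      Finset.sum_range_succ]
    simp only [Nat.cast_zero, zero_mul, mul_zero, hdN]
    rw [add_zero, add_zero]
    apply sum_congr rfl
    intro i hi
    have hiN : i < N := mem_range.mp hi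
    have h1 : N - (i+1) + 1 = N - i := by omega
    have h2 : (i:ℤ) + 1 = ((i+1 : ℕ) : ℤ) := by push_cast; ring
    rw [h1, h2]
    push_cast
    ring
  have stepC : (∑ t ∈ range (N+1),
        d t * (((N:ℝ)-(t:ℝ))*(q-((N:ℝ)-(t:ℝ)))) * (x-1)^(t+1) * (x+1)^(N-t-1))
      = ∑ t ∈ range (N+1),
        d ((t:ℤ)-1) * (((N:ℝ)-(t:ℝ)+1)*(q-(N:ℝ)+(t:ℝ)-1)) * (x-1)^t * (x+1)^(N-t) := by
    rw [Finset.sum_range_succ,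
      Finset.sum_range_succ' (fun t => d ((t:ℤ)-1) * (((N:ℝ)-(t:ℝ)+1)*(q-(N:ℝ)+(t:ℝ)-1)) * (x-1)^t * (x+1)^(N-t))]
    simp only [Nat.cast_zero, zero_sub, hd0, sub_self, zero_mul, mul_zero]
    rw [add_zero, add_zero]
    apply sum_congr rfl
    intro i hi
    have h2 : ((i+1:ℕ):ℤ) - 1 = (i:ℤ) := by push_cast; ring
    have h3 : N - (i+1) = N - i - 1 := by omega
    rw [h2, h3]
    push_cast
    ring
  rw [stepA, stepC, ← sum_add_distrib, ← sum_add_distrib]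
  apply Finset.sum_eq_zero
  intro t ht
  have h := hrec (t : ℤ)
  push_cast at h
  linear_combination ((x-1)^t * (x+1)^(N-t)) * h

lemma c0_coe (p ℓ : ℕ) {s : ℕ} (hs : s ≤ ℓ) :
    c0 p ℓ ((p:ℤ)+s) = gbinom ((ℓ:ℤ)+p) (ℓ-s) * gbinom ((ℓ:ℤ)-p) s := by
  unfold c0
  rw [show (ℓ:ℤ)+p-((p:ℤ)+s) = ((ℓ-s:ℕ):ℤ) by omega,
      show (p:ℤ)+s-p = ((s:ℕ):ℤ) by omega, gbinomZ_coe, gbinomZ_coe]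

lemma c0_coe2 (p ℓ : ℕ) {t : ℕ} (ht : t ≤ ℓ) :
    c0 p ℓ (((ℓ+p:ℕ):ℤ)-t) = gbinom ((ℓ:ℤ)+p) t * gbinom ((ℓ:ℤ)-p) (ℓ-t) := by
  unfold c0
  rw [show (ℓ:ℤ)+p-((((ℓ+p:ℕ)):ℤ)-t) = ((t:ℕ):ℤ) by omega,
      show (((ℓ+p:ℕ)):ℤ)-t-p = ((ℓ-t:ℕ):ℤ) by omega, gbinomZ_coe, gbinomZ_coe]

lemma hM1 (p ℓ : ℕ) (A : ℝ) (x : ℝ) :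
    A * ((1 - x)/2)^p * jacobiJ (ℓ:ℤ) (p:ℤ) (-(p:ℤ)) x
      = ∑ t ∈ range ((ℓ+p)+1),
        (A * (-1:ℝ)^p * c0 p ℓ t / 2^(ℓ+p)) * (x-1)^t * (x+1)^((ℓ+p)-t) := by
  have hJ1 : jacobiJ (ℓ:ℤ) (p:ℤ) (-(p:ℤ)) x
      = ∑ s ∈ range (ℓ+1), gbinom ((ℓ:ℤ)+p) (ℓ-s) * gbinom ((ℓ:ℤ)+-(p:ℤ)) s *
          ((x-1)/2)^s * ((x+1)/2)^(ℓ-s) := by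
    rw [jacobiJ, if_neg (by omega : ¬ ((ℓ:ℤ) < 0)), Int.toNat_natCast]
  rw [hJ1,
    ← Finset.sum_range_add_sum_Ico _ (show p ≤ (ℓ+p)+1 by omega),
    show (∑ t ∈ range p,
        (A * (-1:ℝ)^p * c0 p ℓ t / 2^(ℓ+p)) * (x-1)^t * (x+1)^((ℓ+p)-t)) = 0 from
      Finset.sum_eq_zero (fun t ht => by
        have htp : t < p := mem_range.mp ht
        rw [show c0 p ℓ (t:ℤ) = 0 from by
          unfold c0; rw [gbinomZ_neg _ (by omega : (t:ℤ)-(p:ℤ) < 0)]; ring]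
        ring), zero_add,
    Finset.sum_Ico_eq_sum_range, show (ℓ+p)+1-p = ℓ+1 by omega, Finset.mul_sum]
  apply Finset.sum_congr rfl
  intro s hs
  have hsl : s ≤ ℓ := by have := mem_range.mp hs; omega
  rw [show ((p+s:ℕ):ℤ) = (p:ℤ)+(s:ℕ) by push_cast; ring, c0_coe p ℓ hsl,
      show (ℓ:ℤ)+-(p:ℤ) = (ℓ:ℤ)-(p:ℤ) by ring,
      show (ℓ+p)-(p+s) = ℓ-s by omega,
      show ((1:ℝ)-x)/2 = -((x-1)/2) by ring, neg_pow]
  obtain ⟨k, hk⟩ : ∃ k, ℓ - s = k := ⟨ℓ-s, rfl⟩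
  rw [hk, show ℓ+p = p+s+k by omega]
  have h2 : (2:ℝ) ≠ 0 := by norm_num
  simp only [div_pow]
  field_simp
  ring

lemma hM2 (p ℓ : ℕ) (B : ℝ) (x : ℝ) :
    B * ((1 + x)/2)^p * jacobiJ (ℓ:ℤ) (-(p:ℤ)) (p:ℤ) x
      = ∑ t ∈ range ((ℓ+p)+1),
        (B * c0 p ℓ (((ℓ+p:ℕ):ℤ)-t) / 2^(ℓ+p)) * (x-1)^t * (x+1)^((ℓ+p)-t) := by
  have hJ2 : jacobiJ (ℓ:ℤ) (-(p:ℤ)) (p:ℤ) x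
      = ∑ s ∈ range (ℓ+1), gbinom ((ℓ:ℤ)+-(p:ℤ)) (ℓ-s) * gbinom ((ℓ:ℤ)+p) s *
          ((x-1)/2)^s * ((x+1)/2)^(ℓ-s) := by
    rw [jacobiJ, if_neg (by omega : ¬ ((ℓ:ℤ) < 0)), Int.toNat_natCast]
  rw [hJ2,
    ← Finset.sum_range_add_sum_Ico _ (show ℓ+1 ≤ (ℓ+p)+1 by omega),
    show (∑ t ∈ Ico (ℓ+1) ((ℓ+p)+1),
        (B * c0 p ℓ (((ℓ+p:ℕ):ℤ)-t) / 2^(ℓ+p)) * (x-1)^t * (x+1)^((ℓ+p)-t)) = 0 from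
      Finset.sum_eq_zero (fun t ht => by
        have htl : ℓ+1 ≤ t := (mem_Ico.mp ht).1
        rw [show c0 p ℓ (((ℓ+p:ℕ):ℤ)-t) = 0 from by
          unfold c0; rw [gbinomZ_neg (((ℓ:ℤ)-p)) (by omega : ((((ℓ+p:ℕ)):ℤ)-t)-(p:ℤ) < 0)]; ring]
        ring), add_zero, Finset.mul_sum]
  apply Finset.sum_congr rfl
  intro s hs
  have hsl : s ≤ ℓ := by have := mem_range.mp hs; omega
  rw [c0_coe2 p ℓ hsl, show (ℓ:ℤ)+-(p:ℤ) = (ℓ:ℤ)-(p:ℤ) by ring]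
  obtain ⟨k, hk⟩ : ∃ k, ℓ - s = k := ⟨ℓ-s, rfl⟩
  rw [hk, show (ℓ+p)-s = p+k by omega, show ℓ+p = p+s+k by omega]
  have h2 : (2:ℝ) ≠ 0 := by norm_num
  simp only [div_pow]
  field_simp
  ring

def dcoef (p ℓ : ℕ) (A B : ℝ) (t : ℤ) : ℝ :=
  (A * (-1:ℝ)^p * c0 p ℓ t + B * c0 p ℓ (((ℓ+p:ℕ):ℤ) - t)) / 2^(ℓ+p)

lemma dcoef_bot (p ℓ : ℕ) (A B : ℝ) : dcoef p ℓ A B (-1) = 0 := by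
  unfold dcoef
  rw [show c0 p ℓ (-1) = 0 from by
      unfold c0; rw [gbinomZ_neg _ (by omega : (-1:ℤ)-(p:ℤ) < 0)]; ring,
    show c0 p ℓ (((ℓ+p:ℕ):ℤ) - (-1)) = 0 from by
      unfold c0; rw [gbinomZ_neg _ (by omega : (ℓ:ℤ)+(p:ℤ)-(((ℓ+p:ℕ):ℤ)-(-1)) < 0)]; ring]
  ring

lemma dcoef_top (p ℓ : ℕ) (A B : ℝ) : dcoef p ℓ A B (((ℓ+p:ℕ):ℤ)+1) = 0 := by
  unfold dcoef
  rw [show c0 p ℓ (((ℓ+p:ℕ):ℤ)+1) = 0 from by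
      unfold c0; rw [gbinomZ_neg _ (by omega : (ℓ:ℤ)+(p:ℤ)-(((ℓ+p:ℕ):ℤ)+1) < 0)]; ring,
    show c0 p ℓ (((ℓ+p:ℕ):ℤ) - (((ℓ+p:ℕ):ℤ)+1)) = 0 from by
      unfold c0; rw [gbinomZ_neg _ (by omega : ((ℓ+p:ℕ):ℤ) - (((ℓ+p:ℕ):ℤ)+1)-(p:ℤ) < 0)]; ring]
  ring

lemma dcoef_rec (p ℓ : ℕ) (hp : 1 ≤ p) (hl : ℓ+1 ≤ p) (A B : ℝ) (t : ℤ) :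
    ((t:ℝ)+1)*((p:ℝ)-((t:ℝ)+1)) * dcoef p ℓ A B (t+1)
      + (-2*(t:ℝ)*(((ℓ+p:ℕ):ℝ)-(t:ℝ)) + ((p:ℝ)-1)*((ℓ+p:ℕ):ℝ)
          + ((ℓ:ℝ)+(p:ℝ))*((ℓ:ℝ)-(p:ℝ)+1)) * dcoef p ℓ A B t
      + ((((ℓ+p:ℕ):ℝ)-(t:ℝ)+1)*((p:ℝ)-((ℓ+p:ℕ):ℝ)+(t:ℝ)-1)) * dcoef p ℓ A B (t-1) = 0 := by
  have h1 := c0_rec p ℓ hp hl t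
  have h2 := c0_rec p ℓ hp hl (((ℓ+p:ℕ):ℤ) - t)
  unfold dcoef
  rw [show ((ℓ+p:ℕ):ℤ) - (t+1) = (((ℓ+p:ℕ):ℤ) - t) - 1 by ring,
      show ((ℓ+p:ℕ):ℤ) - (t-1) = (((ℓ+p:ℕ):ℤ) - t) + 1 by ring]
  push_cast at h1 h2 ⊢
  linear_combination (A * (-1:ℝ)^p / 2^(ℓ+p)) * h1 + (B / 2^(ℓ+p)) * h2

/-- The general solution `a(τ) = A((1-τ)/2)^p J_ℓ^{(p,-p)}(τ) + B((1+τ)/2)^p J_ℓ^{(-p,p)}(τ)`,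
for `p ≥ 1`, `0 ≤ ℓ ≤ p-1`, satisfies the separated wave equation
`(1-τ²)a'' + 2τ(p-1)a' + (ℓ+p)(ℓ-p+1)a = 0` on `(-1,1)`. -/
theorem spin0_jacobi_solution_satisfies_ODE
    (p ℓ : ℕ) (hp : 1 ≤ p) (hl : ℓ + 1 ≤ p) (A B : ℝ) (a : ℝ → ℝ)
    (ha : a = fun τ => A * ((1 - τ) / 2) ^ p * jacobiJ (ℓ : ℤ) (p : ℤ) (-(p : ℤ)) τ
      + B * ((1 + τ) / 2) ^ p * jacobiJ (ℓ : ℤ) (-(p : ℤ)) (p : ℤ) τ) :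
    ∀ τ ∈ Set.Ioo (-1 : ℝ) 1,
      (1 - τ ^ 2) * deriv (deriv a) τ + 2 * τ * ((p : ℝ) - 1) * deriv a τ
        + ((ℓ : ℝ) + (p : ℝ)) * ((ℓ : ℝ) - (p : ℝ) + 1) * a τ = 0 := by
  intro τ hτ
  have hEval : a = fun x => (∑ t ∈ range ((ℓ+p)+1),
      C (dcoef p ℓ A B t) * ((X:ℝ[X]) - 1)^t * ((X:ℝ[X]) + 1)^((ℓ+p)-t)).eval x := by
    rw [ha]; funext x
    rw [eval_finset_sum]
    simp only [eval_mul, eval_pow, eval_sub, eval_add, eval_one, eval_X, eval_C]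
    rw [hM1 p ℓ A x, hM2 p ℓ B x, ← Finset.sum_add_distrib]
    apply sum_congr rfl
    intro t ht
    unfold dcoef
    ring
  have h1 : deriv a = fun x => (derivative (∑ t ∈ range ((ℓ+p)+1),
      C (dcoef p ℓ A B t) * ((X:ℝ[X]) - 1)^t * ((X:ℝ[X]) + 1)^((ℓ+p)-t))).eval x := by
    rw [hEval]; funext x; simp [Polynomial.deriv]
  have h2 : deriv (deriv a) = fun x => (derivative (derivative (∑ t ∈ range ((ℓ+p)+1),
      C (dcoef p ℓ A B t) * ((X:ℝ[X]) - 1)^t * ((X:ℝ[X]) + 1)^((ℓ+p)-t)))).eval x := by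
    rw [h1]; funext x; simp [Polynomial.deriv]
  rw [h2, h1, hEval]
  exact sum_solves (p:ℝ) (((ℓ:ℝ)+(p:ℝ))*((ℓ:ℝ)-(p:ℝ)+1)) (ℓ+p) (dcoef p ℓ A B)
    (dcoef_bot p ℓ A B) (dcoef_top p ℓ A B) (dcoef_rec p ℓ hp hl A B) τ
end
end

section
/- Fix real constants A, B, C, D. (i) Let a₁ : (−1,1) → ℝ be given by a₁(τ) = ((1−τ²)/4)·( C + D·∫_0^τ (1−s²)^{−2} ds ). Then (1+τ)²·a₁''(τ) − 2(1+τ)·a₁'(τ) + 2·a₁(τ) = −D/(2(1−τ)) for all τ ∈ (−1,1). (ii) For an integer p ≥ 2, let a_p : (−1,1) → ℝ be given by a_p(τ) = A·((1−τ)/2)^p·(τ+p) + B·((1+τ)/2)^p·(τ−p). Then (1+τ)²·a_p''(τ) − 2p(1+τ)·a_p'(τ) + p(p+1)·a_p(τ) = 2^{2−p}·(p−1)·p·(p+1)·A·(1−τ)^{p−2} for all τ ∈ (−1,1). -/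
noncomputable section

open Set MeasureTheory

private lemma h1pow_aux (k : ℕ) (τ : ℝ) :
    HasDerivAt (fun t : ℝ => ((1-t)/2)^(k+1)) (-(((k:ℝ)+1)/2) * ((1-τ)/2)^k) τ := by
  have h := (((hasDerivAt_id τ).const_sub 1).div_const 2).pow (k+1)
  refine (show HasDerivAt (fun t : ℝ => ((1-t)/2)^(k+1)) _ τ from h).congr_deriv ?_
  simp only [id, Nat.cast_add, Nat.cast_one, Nat.add_sub_cancel]; ring

private lemma h2pow_aux (k : ℕ) (τ : ℝ) :
    HasDerivAt (fun t : ℝ => ((1+t)/2)^(k+1)) ((((k:ℝ)+1)/2) * ((1+τ)/2)^k) τ := by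
  have h := (((hasDerivAt_id τ).const_add 1).div_const 2).pow (k+1)
  refine (show HasDerivAt (fun t : ℝ => ((1+t)/2)^(k+1)) _ τ from h).congr_deriv ?_
  simp only [id, Nat.cast_add, Nat.cast_one, Nat.add_sub_cancel]; ring

private lemma part_two_aux (A B : ℝ) (m : ℕ) (τ : ℝ) :
      (1 + τ) ^ 2 * deriv (deriv (fun τ => A * ((1 - τ) / 2) ^ (m+2) * (τ + ((m:ℝ)+2))
          + B * ((1 + τ) / 2) ^ (m+2) * (τ - ((m:ℝ)+2)))) τ
        - 2 * ((m:ℝ)+2) * (1 + τ) * deriv (fun τ => A * ((1 - τ) / 2) ^ (m+2) * (τ + ((m:ℝ)+2))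
          + B * ((1 + τ) / 2) ^ (m+2) * (τ - ((m:ℝ)+2))) τ
        + ((m:ℝ)+2) * (((m:ℝ)+2) + 1) * (A * ((1 - τ) / 2) ^ (m+2) * (τ + ((m:ℝ)+2))
          + B * ((1 + τ) / 2) ^ (m+2) * (τ - ((m:ℝ)+2)))
      = ((2:ℝ)^m)⁻¹ * (((m:ℝ)+2) - 1) * ((m:ℝ)+2) * (((m:ℝ)+2) + 1) * A * (1 - τ) ^ m := by
  set c : ℝ := (m:ℝ)+2 with hc
  set D1 : ℝ → ℝ := fun t =>
      A * (((1-t)/2)^(m+2) - c/2 * ((1-t)/2)^(m+1) * (t+c))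
      + B * (((1+t)/2)^(m+2) + c/2 * ((1+t)/2)^(m+1) * (t-c)) with hD1def
  have hD1 : ∀ t : ℝ, HasDerivAt (fun τ => A * ((1 - τ) / 2) ^ (m+2) * (τ + c)
      + B * ((1 + τ) / 2) ^ (m+2) * (τ - c)) (D1 t) t := by
    intro t
    have h := ((((h1pow_aux (m+1) t).const_mul A).mul ((hasDerivAt_id t).add_const c))).add
      ((((h2pow_aux (m+1) t).const_mul B).mul ((hasDerivAt_id t).sub_const c)))
    refine h.congr_deriv ?_
    simp only [hD1def, hc, id]; push_cast; ring
  set D2 : ℝ → ℝ := fun t =>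
      A * ( c*(c-1)/4 * ((1-t)/2)^m * (t+c) - c * ((1-t)/2)^(m+1) )
      + B * ( c*(c-1)/4 * ((1+t)/2)^m * (t-c) + c * ((1+t)/2)^(m+1) ) with hD2def
  have hD2 : ∀ t : ℝ, HasDerivAt D1 (D2 t) t := by
    intro t
    have h := (((h1pow_aux (m+1) t).sub ((((h1pow_aux m t).const_mul (c/2))).mul
        ((hasDerivAt_id t).add_const c))).const_mul A).add
      (((h2pow_aux (m+1) t).add ((((h2pow_aux m t).const_mul (c/2))).mul
        ((hasDerivAt_id t).sub_const c))).const_mul B)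
    refine h.congr_deriv ?_
    simp only [hD2def, hc, id]; push_cast; ring
  have hda : deriv (fun τ => A * ((1 - τ) / 2) ^ (m+2) * (τ + c)
      + B * ((1 + τ) / 2) ^ (m+2) * (τ - c)) = D1 := funext fun t => (hD1 t).deriv
  rw [hda, (hD2 τ).deriv]
  have key : ((2:ℝ)^m)⁻¹ * (c - 1) * c * (c + 1) * A * (1 - τ) ^ m
      = (c - 1) * c * (c + 1) * A * ((1-τ)/2) ^ m := by
    rw [div_pow]; ring
  rw [key]
  simp only [hD2def, hD1def, hc]
  ring

private lemma part_one_aux (C D : ℝ) (τ : ℝ) (hτ : τ ∈ Set.Ioo (-1:ℝ) 1) :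
    (1 + τ) ^ 2 * deriv (deriv (fun τ => ((1 - τ ^ 2) / 4) *
          (C + D * ∫ s in (0 : ℝ)..τ, ((1 - s ^ 2) ^ 2)⁻¹))) τ
      - 2 * (1 + τ) * deriv (fun τ => ((1 - τ ^ 2) / 4) *
          (C + D * ∫ s in (0 : ℝ)..τ, ((1 - s ^ 2) ^ 2)⁻¹)) τ
      + 2 * (((1 - τ ^ 2) / 4) * (C + D * ∫ s in (0 : ℝ)..τ, ((1 - s ^ 2) ^ 2)⁻¹))
    = -(D / (2 * (1 - τ))) := by
  set g : ℝ → ℝ := fun s => ((1 - s ^ 2) ^ 2)⁻¹ with hg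
  set F : ℝ → ℝ := fun t => ∫ s in (0 : ℝ)..t, g s with hFdef
  have hgcont : ContinuousOn g (Set.Ioo (-1:ℝ) 1) := by
    apply ContinuousOn.inv₀
    · fun_prop
    · intro x hx
      obtain ⟨h1, h2⟩ := hx
      have : 0 < 1 - x ^ 2 := by nlinarith
      positivity
  have hF : ∀ t ∈ Set.Ioo (-1:ℝ) 1, HasDerivAt F (g t) t := by
    intro t ht
    have hsub : Set.uIcc (0:ℝ) t ⊆ Set.Ioo (-1:ℝ) 1 :=
      Set.OrdConnected.uIcc_subset Set.ordConnected_Ioo (by constructor <;> norm_num) ht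
    have hint : IntervalIntegrable g volume 0 t := (hgcont.mono hsub).intervalIntegrable
    exact intervalIntegral.integral_hasDerivAt_right hint
      (hgcont.stronglyMeasurableAtFilter isOpen_Ioo t ht)
      (hgcont.continuousAt (Ioo_mem_nhds ht.1 ht.2))
  set D1 : ℝ → ℝ := fun t => -(t/2) * (C + D * F t) + (D/4) * (1-t^2)⁻¹ with hD1def
  have hD1 : ∀ t ∈ Set.Ioo (-1:ℝ) 1,
      HasDerivAt (fun τ => ((1 - τ ^ 2) / 4) * (C + D * F τ)) (D1 t) t := by
    intro t ht
    have hne : (1 - t^2) ≠ 0 := by nlinarith [ht.1, ht.2, sq_nonneg t]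
    have h := (((hasDerivAt_pow 2 t).const_sub 1).div_const 4).mul
      (((hF t ht).const_mul D).const_add C)
    refine h.congr_deriv ?_
    simp only [hD1def, hg]
    field_simp
    ring
  have hd2 : HasDerivAt D1 (-(C + D * F τ)/2) τ := by
    have hne : (1 - τ^2) ≠ 0 := by nlinarith [hτ.1, hτ.2, sq_nonneg τ]
    have h := (((hasDerivAt_id τ).div_const 2).neg.mul
        (((hF τ hτ).const_mul D).const_add C)).add
      ((((hasDerivAt_pow 2 τ).const_sub 1).inv hne).const_mul (D/4))
    refine h.congr_deriv ?_
    simp only [hg, id, Pi.neg_apply]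
    field_simp
    ring
  have hev : deriv (fun τ => ((1 - τ ^ 2) / 4) * (C + D * F τ)) =ᶠ[nhds τ] D1 := by
    filter_upwards [Ioo_mem_nhds hτ.1 hτ.2] with t ht using (hD1 t ht).deriv
  have h2nd : deriv (deriv (fun τ => ((1 - τ ^ 2) / 4) * (C + D * F τ))) τ
      = -(C + D * F τ)/2 := by
    rw [Filter.EventuallyEq.deriv_eq hev, hd2.deriv]
  have h1st : deriv (fun τ => ((1 - τ ^ 2) / 4) * (C + D * F τ)) τ = D1 τ :=
    (hD1 τ hτ).deriv
  rw [h2nd, h1st]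
  have hne1 : (1 - τ) ≠ 0 := by have := hτ.2; intro h; linarith
  have hne2 : (1 + τ) ≠ 0 := by have := hτ.1; intro h; linarith
  simp only [hD1def]
  have hne : (1 - τ^2) ≠ 0 := by nlinarith [hτ.1, hτ.2]
  field_simp
  ring

/-- The `ℓ = 1` quantities `Q¹_p(τ) = (1+τ)²a_p'' - 2p(1+τ)a_p' + p(p+1)a_p`:
(i) for `a₁(τ) = ((1-τ²)/4)(C + D∫_0^τ (1-s²)^{-2} ds)` one has
`(1+τ)²a₁'' - 2(1+τ)a₁' + 2a₁ = -D/(2(1-τ))`;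
(ii) for `p ≥ 2` and `a_p(τ) = A((1-τ)/2)^p(τ+p) + B((1+τ)/2)^p(τ-p)` one has
`(1+τ)²a_p'' - 2p(1+τ)a_p' + p(p+1)a_p = 2^{2-p}(p-1)p(p+1)A(1-τ)^{p-2}` on `(-1,1)`. -/
theorem Q1_for_ell_one_solutions
    (A B C D : ℝ) (p : ℕ) (hp : 2 ≤ p)
    (a₁ : ℝ → ℝ)
    (h₁ : a₁ = fun τ => ((1 - τ ^ 2) / 4) *
      (C + D * ∫ s in (0 : ℝ)..τ, ((1 - s ^ 2) ^ 2)⁻¹))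
    (a : ℝ → ℝ)
    (hₚ : a = fun τ => A * ((1 - τ) / 2) ^ p * (τ + (p : ℝ))
      + B * ((1 + τ) / 2) ^ p * (τ - (p : ℝ))) :
    (∀ τ ∈ Set.Ioo (-1 : ℝ) 1,
      (1 + τ) ^ 2 * deriv (deriv a₁) τ - 2 * (1 + τ) * deriv a₁ τ + 2 * a₁ τ
        = -(D / (2 * (1 - τ)))) ∧
    (∀ τ ∈ Set.Ioo (-1 : ℝ) 1,
      (1 + τ) ^ 2 * deriv (deriv a) τ - 2 * (p : ℝ) * (1 + τ) * deriv a τ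
          + (p : ℝ) * ((p : ℝ) + 1) * a τ
        = (2 : ℝ) ^ ((2 : ℤ) - (p : ℤ)) * ((p : ℝ) - 1) * (p : ℝ) * ((p : ℝ) + 1)
            * A * (1 - τ) ^ (p - 2)) := by
  obtain ⟨m, rfl⟩ : ∃ m, p = m + 2 := ⟨p - 2, by omega⟩
  subst h₁ hₚ
  constructor
  · intro τ hτ
    exact part_one_aux C D τ hτ
  · intro τ hτ
    have hz : (2:ℝ) ^ ((2 : ℤ) - ((m+2 : ℕ) : ℤ)) = ((2:ℝ)^m)⁻¹ := by
      have h : ((2 : ℤ) - ((m+2 : ℕ) : ℤ)) = -(m:ℤ) := by push_cast; ring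
      rw [h, zpow_neg, zpow_natCast]
    rw [hz, show m + 2 - 2 = m from rfl]
    push_cast
    exact part_two_aux A B m τ

end
end

section
/- Let p ≥ 0 be an integer, C, D real, F(τ) := ∫_0^τ (1−s²)^{−(p+1)} ds, and a(τ) = ((1−τ)/2)^p·((1+τ)/2)^p·(C + D·F(τ)) on (−1,1). Define Q^n(τ) := Σ_{q=0}^{n+1} (−1)^q p^{[q]} C(n+1,q)(1+τ)^{n+1−q} a^{(n+1−q)}(τ). Define functions g^n recursively on (−1,1) by g^0(τ) = 2^{−2p}·(1−τ)^{−1} and g^{n+1}(τ) = (1+τ)·(g^n)'(τ) + (−1)^{n+1}·2^{−2p}·p_{[n+1]}·(1+τ)^{n+1}·(1−τ)^{−n−2} − (p+n+1)·g^n(τ). Then for every integer n ≥ 0 and every τ ∈ (−1,1): Q^n(τ) = g^n(τ)·D + (−1)^{n+1}·p_{[n+1]}·((1+τ)/2)^{p+n+1}·((1−τ)/2)^{p−n−1}·( C + D·F(τ) ), where ((1−τ)/2)^{p−n−1} denotes the real power with possibly negative integer exponent. -/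
noncomputable section

/-- The rising factorial `x^{[q]} = x(x+1)⋯(x+q-1)`, with `x^{[0]} = 1`. -/
def risingFact (x : ℝ) (q : ℕ) : ℝ := ∏ i ∈ Finset.range q, (x + (i : ℝ))

/-- The falling factorial `x_{[q]} = x(x-1)⋯(x-q+1)`, with `x_{[0]} = 1`. -/
def fallingFact (x : ℝ) (q : ℕ) : ℝ := ∏ i ∈ Finset.range q, (x - (i : ℝ))

/-- `Q^n(τ) = Σ_{q=0}^{n+1} (-1)^q p^{[q]} C(n+1,q) (1+τ)^{n+1-q} a^{(n+1-q)}(τ)`. -/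
def Qfun (p : ℕ) (a : ℝ → ℝ) (n : ℕ) (τ : ℝ) : ℝ :=
  ∑ q ∈ Finset.range (n + 2),
    (-1 : ℝ) ^ q * risingFact (p : ℝ) q * (Nat.choose (n + 1) q : ℝ) *
      (1 + τ) ^ (n + 1 - q) * iteratedDeriv (n + 1 - q) a τ

/-- The functions `g^n` defined recursively by `g^0(τ) = 2^{-2p}(1-τ)⁻¹` and
`g^{n+1} = (1+τ)(g^n)' + (-1)^{n+1} 2^{-2p} p_{[n+1]} (1+τ)^{n+1}(1-τ)^{-n-2} - (p+n+1)g^n`. -/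
def gFun (p : ℕ) : ℕ → ℝ → ℝ
  | 0 => fun τ => (2 : ℝ) ^ (-(2 * (p : ℤ))) * (1 - τ)⁻¹
  | n + 1 => fun τ =>
      (1 + τ) * deriv (gFun p n) τ
        + (-1 : ℝ) ^ (n + 1) * (2 : ℝ) ^ (-(2 * (p : ℤ))) * fallingFact (p : ℝ) (n + 1) *
            (1 + τ) ^ (n + 1) * (1 - τ) ^ (-((n : ℤ) + 2))
        - ((p : ℝ) + (n : ℝ) + 1) * gFun p n τ

open Set Finset
open scoped ContDiff

-- ------------------------------------------------------------------
-- auxiliary facts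
-- ------------------------------------------------------------------

lemma risingFact_succ (x : ℝ) (q : ℕ) :
    risingFact x (q + 1) = risingFact x q * (x + q) := Finset.prod_range_succ _ _

lemma fallingFact_succ (x : ℝ) (q : ℕ) :
    fallingFact x (q + 1) = fallingFact x q * (x - q) := Finset.prod_range_succ _ _

lemma risingFact_zero (x : ℝ) : risingFact x 0 = 1 := rfl

lemma iteratedDerivWithin_isOpen_eq {f : ℝ → ℝ} {s : Set ℝ} (hs : IsOpen s) (n : ℕ) :
    Set.EqOn (iteratedDerivWithin n f s) (iteratedDeriv n f) s := fun x hx => by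
  simp only [iteratedDerivWithin, iteratedDeriv, iteratedFDerivWithin_of_isOpen n hs hx]

lemma F_hasDerivAt (p : ℕ) {τ : ℝ} (hτ : τ ∈ Ioo (-1:ℝ) 1) :
    HasDerivAt (fun t => ∫ s in (0:ℝ)..t, ((1 - s ^ 2) ^ (p + 1))⁻¹)
      (((1 - τ ^ 2) ^ (p + 1))⁻¹) τ := by
  have hcont : ContinuousOn (fun s : ℝ => ((1 - s ^ 2) ^ (p + 1))⁻¹) (Ioo (-1) 1) := by
    apply ContinuousOn.inv₀
    · fun_prop
    · intro x hx
      have : 0 < 1 - x ^ 2 := by nlinarith [hx.1, hx.2]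
      positivity
  have hsub : uIcc (0:ℝ) τ ⊆ Ioo (-1) 1 :=
    Set.ordConnected_Ioo.uIcc_subset (by constructor <;> norm_num) hτ
  exact intervalIntegral.integral_hasDerivAt_right
    ((hcont.mono hsub).intervalIntegrable)
    (hcont.stronglyMeasurableAtFilter isOpen_Ioo τ hτ)
    (hcont.continuousAt (isOpen_Ioo.mem_nhds hτ))

lemma a_contDiffOn (p : ℕ) (C D : ℝ) {F : ℝ → ℝ}
    (hFd : ∀ τ ∈ Ioo (-1:ℝ) 1, HasDerivAt F (((1 - τ ^ 2) ^ (p + 1))⁻¹) τ) :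
    ContDiffOn ℝ ∞ (fun τ => ((1 - τ) / 2) ^ p * ((1 + τ) / 2) ^ p * (C + D * F τ))
      (Ioo (-1:ℝ) 1) := by
  have hFs : ContDiffOn ℝ ∞ F (Ioo (-1:ℝ) 1) := by
    rw [contDiffOn_infty_iff_deriv_of_isOpen isOpen_Ioo]
    refine ⟨fun x hx => ((hFd x hx).differentiableAt).differentiableWithinAt, ?_⟩
    have : ContDiffOn ℝ ∞ (fun τ : ℝ => ((1 - τ ^ 2) ^ (p + 1))⁻¹) (Ioo (-1:ℝ) 1) := by
      apply ContDiffOn.inv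
      · fun_prop
      · intro x hx
        have : 0 < 1 - x ^ 2 := by nlinarith [hx.1, hx.2]
        positivity
    exact this.congr fun x hx => (hFd x hx).deriv
  apply ContDiffOn.mul
  · exact (((contDiffOn_const.sub contDiffOn_id).div_const 2).pow p).mul
      (((contDiffOn_const.add contDiffOn_id).div_const 2).pow p)
  · exact contDiffOn_const.add (contDiffOn_const.mul hFs)

lemma diffAt_iteratedDeriv {f : ℝ → ℝ} {s : Set ℝ} (hs : IsOpen s)
    (hf : ContDiffOn ℝ ∞ f s) (k : ℕ) {x : ℝ} (hx : x ∈ s) :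
    DifferentiableAt ℝ (iteratedDeriv k f) x := by
  have h1 : DifferentiableOn ℝ (iteratedDerivWithin k f s) s :=
    hf.differentiableOn_iteratedDerivWithin
      (by exact_mod_cast lt_top_iff_ne_top.mpr (ENat.coe_ne_top k) : (k : WithTop ℕ∞) < ∞)
      hs.uniqueDiffOn
  have h2 : DifferentiableAt ℝ (iteratedDerivWithin k f s) x :=
    (h1 x hx).differentiableAt (hs.mem_nhds hx)
  exact h2.congr_of_eventuallyEq
    (Filter.eventuallyEq_of_mem (hs.mem_nhds hx) fun y hy =>
      (iteratedDerivWithin_isOpen_eq hs k hy).symm)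

lemma Qfun_rec (p : ℕ) (a : ℝ → ℝ) (n : ℕ) {τ : ℝ}
    (hdiff : ∀ k, DifferentiableAt ℝ (iteratedDeriv k a) τ) :
    Qfun p a (n + 1) τ
      = (1 + τ) * deriv (Qfun p a n) τ - ((p : ℝ) + n + 1) * Qfun p a n τ := by
  have key : ∀ q ∈ Finset.range (n + 2), HasDerivAt
      (fun t => (-1 : ℝ) ^ q * risingFact (p : ℝ) q * ((n+1).choose q : ℝ) *
        (1 + t) ^ (n + 1 - q) * iteratedDeriv (n + 1 - q) a t)
      ((-1 : ℝ) ^ q * risingFact (p : ℝ) q * ((n+1).choose q : ℝ) *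
        (((n + 1 - q : ℕ) : ℝ) * (1 + τ) ^ (n - q) * iteratedDeriv (n + 1 - q) a τ
          + (1 + τ) ^ (n + 1 - q) * iteratedDeriv (n + 2 - q) a τ)) τ := by
    intro q hq
    have hqr : q < n + 2 := Finset.mem_range.mp hq
    have h1 : HasDerivAt (fun t : ℝ => (1 + t) ^ (n + 1 - q))
        (((n + 1 - q : ℕ) : ℝ) * (1 + τ) ^ (n - q)) τ := by
      have h := (((hasDerivAt_id τ).const_add 1).fun_pow (n + 1 - q))
      have e : n + 1 - q - 1 = n - q := by omega
      simpa [e] using h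
    have h2 : HasDerivAt (iteratedDeriv (n + 1 - q) a) (iteratedDeriv (n + 2 - q) a τ) τ := by
      have h := (hdiff (n + 1 - q)).hasDerivAt
      have e : n + 2 - q = (n + 1 - q) + 1 := by omega
      rwa [e, iteratedDeriv_succ]
    have h3 := (h1.mul h2).const_mul
      ((-1 : ℝ) ^ q * risingFact (p : ℝ) q * ((n+1).choose q : ℝ))
    simpa [mul_assoc] using h3
  have hQd : HasDerivAt (Qfun p a n)
      (∑ q ∈ Finset.range (n + 2),
        (-1 : ℝ) ^ q * risingFact (p : ℝ) q * ((n+1).choose q : ℝ) *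
          (((n + 1 - q : ℕ) : ℝ) * (1 + τ) ^ (n - q) * iteratedDeriv (n + 1 - q) a τ
            + (1 + τ) ^ (n + 1 - q) * iteratedDeriv (n + 2 - q) a τ)) τ := by
    have h := HasDerivAt.fun_sum key
    have heq : Qfun p a n = fun t => ∑ q ∈ Finset.range (n + 2),
        (-1 : ℝ) ^ q * risingFact (p : ℝ) q * ((n+1).choose q : ℝ) *
          (1 + t) ^ (n + 1 - q) * iteratedDeriv (n + 1 - q) a t := rfl
    rw [heq]
    exact h
  rw [hQd.deriv]
  set A : ℕ → ℝ := fun m => iteratedDeriv m a τ with hA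
  have hRHS : (1 + τ) * (∑ q ∈ Finset.range (n + 2),
        (-1 : ℝ) ^ q * risingFact (p : ℝ) q * ((n+1).choose q : ℝ) *
          (((n + 1 - q : ℕ) : ℝ) * (1 + τ) ^ (n - q) * A (n + 1 - q)
            + (1 + τ) ^ (n + 1 - q) * A (n + 2 - q)))
      - ((p : ℝ) + n + 1) * Qfun p a n τ
      = (∑ q ∈ Finset.range (n + 2),
          (-1 : ℝ) ^ q * risingFact (p : ℝ) q * ((n+1).choose q : ℝ) *
            (1 + τ) ^ (n + 2 - q) * A (n + 2 - q))
        + ∑ q ∈ Finset.range (n + 2),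
            (-1 : ℝ) ^ (q + 1) * risingFact (p : ℝ) (q + 1) * ((n+1).choose q : ℝ) *
              (1 + τ) ^ (n + 1 - q) * A (n + 1 - q) := by
    rw [Qfun, Finset.mul_sum, Finset.mul_sum, ← Finset.sum_sub_distrib,
      ← Finset.sum_add_distrib]
    refine Finset.sum_congr rfl fun q hq => ?_
    have hqr : q < n + 2 := Finset.mem_range.mp hq
    have e2 : n + 2 - q = (n + 1 - q) + 1 := by omega
    rw [risingFact_succ]
    by_cases hq' : q ≤ n
    · have e1 : n + 1 - q = (n - q) + 1 := by omega
      rw [e2, e1]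
      push_cast [Nat.cast_sub hq']
      ring
    · have hq2 : q = n + 1 := by omega
      subst hq2
      simp only [show n + 2 - (n + 1) = 1 from by omega, show n + 1 - (n + 1) = 0 from by omega,
        show n - (n + 1) = 0 from by omega]
      push_cast
      ring
  rw [hRHS]
  have hL : Qfun p a (n + 1) τ
      = (∑ q ∈ Finset.range (n + 2),
          (-1 : ℝ) ^ (q + 1) * risingFact (p : ℝ) (q + 1) * ((n + 1 + 1).choose (q + 1) : ℝ) *
            (1 + τ) ^ (n + 1 - q) * A (n + 1 - q))
        + (1 + τ) ^ (n + 2) * A (n + 2) := by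
    rw [Qfun, Finset.sum_range_succ']
    congr 1
    · refine Finset.sum_congr rfl fun q hq => ?_
      rw [show n + 1 + 1 - (q + 1) = n + 1 - q from by omega]
    · simp [risingFact_zero]
      exact Or.inl rfl
  have hS1 : (∑ q ∈ Finset.range (n + 2),
        (-1 : ℝ) ^ q * risingFact (p : ℝ) q * ((n + 1).choose q : ℝ) *
          (1 + τ) ^ (n + 2 - q) * A (n + 2 - q))
      = (∑ q ∈ Finset.range (n + 1),
          (-1 : ℝ) ^ (q + 1) * risingFact (p : ℝ) (q + 1) * ((n + 1).choose (q + 1) : ℝ) *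
            (1 + τ) ^ (n + 1 - q) * A (n + 1 - q))
        + (1 + τ) ^ (n + 2) * A (n + 2) := by
    rw [Finset.sum_range_succ']
    congr 1
    · refine Finset.sum_congr rfl fun q hq => ?_
      rw [show n + 2 - (q + 1) = n + 1 - q from by omega]
    · simp [risingFact_zero]
  rw [hL, hS1]
  have hsplit : ∀ q ∈ Finset.range (n + 2),
      (-1 : ℝ) ^ (q + 1) * risingFact (p : ℝ) (q + 1) * ((n + 1 + 1).choose (q + 1) : ℝ) *
          (1 + τ) ^ (n + 1 - q) * A (n + 1 - q)
      = (-1 : ℝ) ^ (q + 1) * risingFact (p : ℝ) (q + 1) * ((n + 1).choose (q + 1) : ℝ) *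
            (1 + τ) ^ (n + 1 - q) * A (n + 1 - q)
        + (-1 : ℝ) ^ (q + 1) * risingFact (p : ℝ) (q + 1) * ((n + 1).choose q : ℝ) *
            (1 + τ) ^ (n + 1 - q) * A (n + 1 - q) := by
    intro q hq
    rw [Nat.choose_succ_succ (n + 1) q]
    push_cast
    ring
  rw [Finset.sum_congr rfl hsplit, Finset.sum_add_distrib, Finset.sum_range_succ]
  rw [show (n + 1).choose (n + 1 + 1) = 0 from Nat.choose_eq_zero_of_lt (by omega)]
  push_cast
  ring

lemma Qfun_differentiableAt (p : ℕ) (a : ℝ → ℝ) (n : ℕ) {τ : ℝ}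
    (hdiff : ∀ k, DifferentiableAt ℝ (iteratedDeriv k a) τ) :
    DifferentiableAt ℝ (Qfun p a n) τ := by
  have : Qfun p a n = fun t => ∑ q ∈ Finset.range (n + 2),
      (-1 : ℝ) ^ q * risingFact (p : ℝ) q * ((n+1).choose q : ℝ) *
        (1 + t) ^ (n + 1 - q) * iteratedDeriv (n + 1 - q) a t := rfl
  rw [this]
  apply DifferentiableAt.fun_sum
  intro q hq
  exact ((((differentiableAt_const _).mul
      (((differentiableAt_const (1:ℝ)).add differentiableAt_id).pow _))).mul (hdiff _))

set_option maxHeartbeats 2000000 in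
lemma main_aux (p : ℕ) (C D : ℝ) (F : ℝ → ℝ)
    (hFd : ∀ τ ∈ Ioo (-1:ℝ) 1, HasDerivAt F (((1 - τ ^ 2) ^ (p + 1))⁻¹) τ) :
    ∀ n : ℕ, ∀ τ ∈ Set.Ioo (-1 : ℝ) 1,
      Qfun p (fun τ => ((1 - τ) / 2) ^ p * ((1 + τ) / 2) ^ p * (C + D * F τ)) n τ
        = gFun p n τ * D
          + (-1 : ℝ) ^ (n + 1) * fallingFact (p : ℝ) (n + 1) *
              ((1 + τ) / 2) ^ (p + n + 1) * ((1 - τ) / 2) ^ ((p : ℤ) - (n : ℤ) - 1) *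
              (C + D * F τ) := by
  set a : ℝ → ℝ := fun τ => ((1 - τ) / 2) ^ p * ((1 + τ) / 2) ^ p * (C + D * F τ) with hadef
  intro n
  induction n with
  | zero =>
    intro τ hτ
    have hx : (1:ℝ) - τ ≠ 0 := sub_ne_zero.mpr (ne_of_gt hτ.2)
    have hy : (1:ℝ) + τ ≠ 0 := by nlinarith [hτ.1]
    have hu : ((1:ℝ) - τ)/2 ≠ 0 := div_ne_zero hx two_ne_zero
    have hdF : HasDerivAt (fun t => C + D * F t) (D * ((1 - τ^2)^(p+1))⁻¹) τ :=
      ((hFd τ hτ).const_mul D).const_add C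
    have hu0 : HasDerivAt (fun t : ℝ => (1 - t)/2) (-1/2) τ := by
      simpa using ((hasDerivAt_id τ).const_sub 1).div_const 2
    have hv0 : HasDerivAt (fun t : ℝ => (1 + t)/2) (1/2) τ := by
      simpa using ((hasDerivAt_id τ).const_add 1).div_const 2
    have hada : HasDerivAt a
        (((p : ℝ) * ((1-τ)/2)^(p-1) * (-1/2) * ((1+τ)/2)^p
            + ((1-τ)/2)^p * ((p : ℝ) * ((1+τ)/2)^(p-1) * (1/2))) * (C + D * F τ)
          + ((1-τ)/2)^p * ((1+τ)/2)^p * (D * ((1 - τ^2)^(p+1))⁻¹)) τ :=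
      ((hu0.pow p).mul (hv0.pow p)).mul hdF
    have hQ0 : Qfun p a 0 τ = (1+τ) * deriv a τ - (p:ℝ) * a τ := by
      simp [Qfun, Finset.sum_range_succ, risingFact, iteratedDeriv_one, iteratedDeriv_zero]
      ring
    rw [hQ0, hada.deriv]
    simp only [gFun, hadef]
    rw [show (1:ℝ) - τ^2 = (1-τ)*(1+τ) from by ring,
      show (2:ℝ)^(-(2*(p:ℤ))) = ((2:ℝ)^p * (2:ℝ)^p)⁻¹ from by
        rw [zpow_neg, show 2*(p:ℤ) = (p:ℤ)+(p:ℤ) from by ring, zpow_add₀ two_ne_zero,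
          zpow_natCast],
      show fallingFact (p:ℝ) (0+1) = (p:ℝ) from by simp [fallingFact]]
    push_cast
    simp only [zpow_sub₀ hu, zpow_natCast, zpow_one, mul_pow, mul_inv]
    rcases p with _ | m
    · norm_num
      field_simp
    · simp only [Nat.add_sub_cancel, div_pow]
      field_simp
      ring
  | succ n ih =>
    intro τ hτ
    have hx : (1:ℝ) - τ ≠ 0 := sub_ne_zero.mpr (ne_of_gt hτ.2)
    have hy : (1:ℝ) + τ ≠ 0 := by nlinarith [hτ.1]
    have hu : ((1:ℝ) - τ)/2 ≠ 0 := div_ne_zero hx two_ne_zero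
    have hdiffs : ∀ k, DifferentiableAt ℝ (iteratedDeriv k a) τ := fun k =>
      diffAt_iteratedDeriv isOpen_Ioo (a_contDiffOn p C D hFd) k hτ
    rw [Qfun_rec p a n hdiffs]
    set hh : ℝ → ℝ := fun t => (-1:ℝ)^(n+1) * fallingFact (p:ℝ) (n+1) *
      ((1+t)/2)^(p+n+1) * ((1-t)/2)^((p:ℤ)-(n:ℤ)-1) * (C + D * F t) with hhdef
    have hEE : Qfun p a n =ᶠ[nhds τ] fun t => gFun p n t * D + hh t :=
      Filter.eventuallyEq_of_mem (isOpen_Ioo.mem_nhds hτ) (fun t ht => ih t ht)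
    have hdF : HasDerivAt (fun t => C + D * F t) (D * ((1 - τ^2)^(p+1))⁻¹) τ :=
      ((hFd τ hτ).const_mul D).const_add C
    have hu0 : HasDerivAt (fun t : ℝ => (1 - t)/2) (-1/2) τ := by
      simpa using ((hasDerivAt_id τ).const_sub 1).div_const 2
    have hv0 : HasDerivAt (fun t : ℝ => (1 + t)/2) (1/2) τ := by
      simpa using ((hasDerivAt_id τ).const_add 1).div_const 2
    have hz : HasDerivAt (fun t : ℝ => ((1-t)/2)^((p:ℤ)-(n:ℤ)-1))
        ((((p:ℤ)-(n:ℤ)-1 : ℤ) : ℝ) * ((1-τ)/2)^((p:ℤ)-(n:ℤ)-1-1) * (-1/2)) τ := by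
      have h := (hasDerivAt_zpow ((p:ℤ)-(n:ℤ)-1) (((1:ℝ)-τ)/2) (Or.inl hu)).comp τ hu0
      simpa [Function.comp_def, mul_assoc] using h
    have hhd : HasDerivAt hh
        ((-1:ℝ)^(n+1) * fallingFact (p:ℝ) (n+1) *
          ((((p+n+1 : ℕ) : ℝ) * ((1+τ)/2)^(p+n+1-1) * (1/2) * ((1-τ)/2)^((p:ℤ)-(n:ℤ)-1)
              + ((1+τ)/2)^(p+n+1) *
                ((((p:ℤ)-(n:ℤ)-1 : ℤ) : ℝ) * ((1-τ)/2)^((p:ℤ)-(n:ℤ)-1-1) * (-1/2))) *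
            (C + D * F τ)
            + ((1+τ)/2)^(p+n+1) * ((1-τ)/2)^((p:ℤ)-(n:ℤ)-1) * (D * ((1 - τ^2)^(p+1))⁻¹))) τ := by
      have h := (((hv0.pow (p+n+1)).mul hz).mul hdF).const_mul
        ((-1:ℝ)^(n+1) * fallingFact (p:ℝ) (n+1))
      simpa [hhdef, mul_assoc, mul_add, mul_comm, mul_left_comm] using h
    have HgD : DifferentiableAt ℝ (fun t => gFun p n t * D) τ := by
      have h1 : DifferentiableAt ℝ (fun t => Qfun p a n t - hh t) τ :=
        (Qfun_differentiableAt p a n hdiffs).sub hhd.differentiableAt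
      apply h1.congr_of_eventuallyEq
      exact Filter.eventuallyEq_of_mem (isOpen_Ioo.mem_nhds hτ)
        (fun t ht => by rw [ih t ht]; ring)
    rw [hEE.deriv_eq, deriv_fun_add HgD hhd.differentiableAt, deriv_mul_const_field,
      hhd.deriv, ih τ hτ]
    simp only [gFun, hhdef]
    rw [show (1:ℝ) - τ^2 = (1-τ)*(1+τ) from by ring,
      show (2:ℝ)^(-(2*(p:ℤ))) = ((2:ℝ)^p * (2:ℝ)^p)⁻¹ from by
        rw [zpow_neg, show 2*(p:ℤ) = (p:ℤ)+(p:ℤ) from by ring, zpow_add₀ two_ne_zero,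
          zpow_natCast],
      show ((1:ℝ)-τ)^(-((n:ℤ)+2)) = (((1:ℝ)-τ)^(n+2))⁻¹ from by
        rw [zpow_neg, show ((n:ℤ)+2) = ((n+2:ℕ):ℤ) from by push_cast; ring, zpow_natCast]]
    rw [show fallingFact (p:ℝ) (n+1+1) = fallingFact (p:ℝ) (n+1) * ((p:ℝ) - ((n+1:ℕ):ℝ)) from
      fallingFact_succ _ _]
    rw [show ((p:ℤ) - ((n+1 : ℕ) : ℤ) - 1) = (p:ℤ)-(n:ℤ)-1-1 from by push_cast; ring]
    have R2 : ((1-τ)/2 : ℝ)^((p:ℤ)-(n:ℤ)-1) = ((1-τ)/2)^((p:ℤ)-(n:ℤ)-1-1) * ((1-τ)/2) := by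
      rw [← zpow_add_one₀ hu]
      norm_num
    rw [R2]
    have R1 : (1+τ) * (((1+τ)/2)^(p+n+1) *
          (((1-τ)/2)^((p:ℤ)-(n:ℤ)-1-1) * ((1-τ)/2)) * (D * (((1-τ)*(1+τ))^(p+1))⁻¹))
        = ((2:ℝ)^p*(2:ℝ)^p)⁻¹ * (1+τ)^(n+1) * (((1-τ)^(n+2))⁻¹) * D := by
      rw [show ((p:ℤ)-(n:ℤ)-1-1) = (p:ℤ) - ((n+2:ℕ):ℤ) from by push_cast; ring,
        zpow_sub₀ hu, zpow_natCast, zpow_natCast, mul_pow]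
      simp only [div_pow]
      field_simp
      ring
    push_cast
    linear_combination ((-1:ℝ)^(n+1) * fallingFact (p:ℝ) (n+1)) * R1


/-- Structure of `Q^n` for the `p = ℓ` solution
`a = ((1-τ)/2)^p((1+τ)/2)^p(C + D·F)` with `F(τ) = ∫_0^τ (1-s²)^{-(p+1)} ds`:
`Q^n = g^n D + (-1)^{n+1} p_{[n+1]} ((1+τ)/2)^{p+n+1}((1-τ)/2)^{p-n-1}(C + D·F)`
on `(-1,1)`. -/
theorem Qfun_structure_highest_harmonic
    (p : ℕ) (C D : ℝ) (F : ℝ → ℝ)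
    (hF : F = fun τ => ∫ s in (0 : ℝ)..τ, ((1 - s ^ 2) ^ (p + 1))⁻¹)
    (a : ℝ → ℝ)
    (ha : a = fun τ => ((1 - τ) / 2) ^ p * ((1 + τ) / 2) ^ p * (C + D * F τ)) :
    ∀ n : ℕ, ∀ τ ∈ Set.Ioo (-1 : ℝ) 1,
      Qfun p a n τ
        = gFun p n τ * D
          + (-1 : ℝ) ^ (n + 1) * fallingFact (p : ℝ) (n + 1) *
              ((1 + τ) / 2) ^ (p + n + 1) * ((1 - τ) / 2) ^ ((p : ℤ) - (n : ℤ) - 1) *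
              (C + D * F τ) := by
  subst hF
  subst ha
  exact main_aux p C D _ (fun τ hτ => F_hasDerivAt p hτ)
end
end

section
/- Fix real constants A_p (p ≥ 1), B_p (p ≥ 1), C. For p ≥ 1 let a_p(τ) = A_p·((1−τ)/2)^p + B_p·((1+τ)/2)^p and let a₀(τ) = C (i.e. the ℓ = 0, p = 0 solution with the regularity condition D = 0 imposed), and set Q^0_p(τ) := (1+τ)·a_p'(τ) − p·a_p(τ). Then the one-sided limits lim_{τ→1⁻} Q^0_p(τ) exist for every p ≥ 0 and equal −A₁ when p = 1 and 0 for all p ≠ 1. Consequently, the classical ℓ = 0 Newman–Penrose constant of the spin-0 field is N⁺_{0,0} = −A_{1,0,0}, depending only on the initial-data parameter A_{1,0,0} and independent of the cut of future null infinity. -/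
/-!
The operator `Q_p = (1 + τ) d/dτ - p` annihilates `((1 + τ) / 2) ^ p`, and applied to
`((1 - τ) / 2) ^ p` it gives `-p ((1 - τ) / 2) ^ (p - 1)`. Hence `Q_p a_p = -p A_p ((1 - τ) / 2) ^ (p - 1)`,
a polynomial whose value at `τ = 1` is `-A₁` for `p = 1` and `0` otherwise.
-/

open Filter Topology

noncomputable def modeProfile (α β : ℝ) (p : ℕ) (τ : ℝ) : ℝ :=
  α * ((1 - τ) / 2) ^ p + β * ((1 + τ) / 2) ^ p

noncomputable def npQ (p : ℕ) (f : ℝ → ℝ) (τ : ℝ) : ℝ :=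
  (1 + τ) * deriv f τ - p * f τ

lemma hasDerivAt_modeProfile (α β : ℝ) (p : ℕ) (τ : ℝ) :
    HasDerivAt (modeProfile α β p)
      (α * (p * ((1 - τ) / 2) ^ (p - 1) * (-(1 / 2)))
        + β * (p * ((1 + τ) / 2) ^ (p - 1) * (1 / 2))) τ := by
  have hminus : HasDerivAt (fun τ : ℝ => (1 - τ) / 2) (-(1 / 2)) τ := by
    simpa [neg_div] using ((hasDerivAt_id τ).const_sub 1).div_const 2
  have hplus : HasDerivAt (fun τ : ℝ => (1 + τ) / 2) (1 / 2) τ := by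
    simpa using ((hasDerivAt_id τ).const_add 1).div_const 2
  exact ((hminus.pow p).const_mul α).add ((hplus.pow p).const_mul β)

lemma npQ_modeProfile (α β : ℝ) (p : ℕ) (τ : ℝ) :
    npQ p (modeProfile α β p) τ = -(p * α * ((1 - τ) / 2) ^ (p - 1)) := by
  rw [npQ, (hasDerivAt_modeProfile α β p τ).deriv, modeProfile]
  rcases Nat.eq_zero_or_pos p with rfl | hp
  · simp
  · obtain ⟨k, rfl⟩ := Nat.exists_eq_add_of_le' hp
    simp only [Nat.add_sub_cancel, pow_succ]
    ring

lemma tendsto_npQ_modeProfile (α β : ℝ) (p : ℕ) :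
    Tendsto (npQ p (modeProfile α β p)) (𝓝 1) (𝓝 (if p = 1 then -α else 0)) := by
  have hQ : npQ p (modeProfile α β p) = fun τ => -(p * α * ((1 - τ) / 2) ^ (p - 1)) :=
    funext (npQ_modeProfile α β p)
  have hvalue : -(p * α * ((1 - 1 : ℝ) / 2) ^ (p - 1)) = if p = 1 then -α else 0 := by
    rcases Nat.lt_trichotomy p 1 with hp | rfl | hp
    · simp [Nat.lt_one_iff.mp hp]
    · simp
    · simp [hp.ne', zero_pow (Nat.sub_ne_zero_of_lt hp)]
  rw [hQ, ← hvalue]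
  exact Continuous.tendsto (by fun_prop) 1

/-- The classical `ℓ = 0` Newman–Penrose constant: with the regularity condition
`D = 0` imposed (`a₀ = C`), and `a_p(τ) = A_p((1-τ)/2)^p + B_p((1+τ)/2)^p` for `p ≥ 1`,
the one-sided limits as `τ → 1⁻` of `Q⁰_p(τ) = (1+τ)a_p'(τ) - p·a_p(τ)` exist for every
`p ≥ 0` and equal `-A₁` when `p = 1` and `0` for all `p ≠ 1`; hence `N⁺₀₀ = -A₁`,
depending only on `A₁` and independent of the cut of future null infinity. -/
theorem classical_NP_constant_ell_zero
    (A B : ℕ → ℝ) (C : ℝ) (a : ℕ → ℝ → ℝ)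
    (ha0 : a 0 = fun _ => C)
    (hap : ∀ p : ℕ, 1 ≤ p → a p = fun τ =>
      A p * ((1 - τ) / 2) ^ p + B p * ((1 + τ) / 2) ^ p) :
    ∀ p : ℕ,
      Filter.Tendsto (fun τ : ℝ => (1 + τ) * deriv (a p) τ - (p : ℝ) * a p τ)
        (nhdsWithin 1 (Set.Iio 1))
        (nhds (if p = 1 then -A 1 else 0)) := by
  intro p
  rcases Nat.eq_zero_or_pos p with rfl | hp
  · simp [ha0]
  · rw [hap p hp]
    convert (tendsto_npQ_modeProfile (A p) (B p) p).mono_left nhdsWithin_le_nhds using 2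
    · rfl
    · split_ifs with h1 <;> simp [h1]
end

section
/- Fix real constants A_p (p ≥ 1), B_p (p ≥ 1), C, D. For p ≥ 1 let a_p(τ) = A_p·((1−τ)/2)^p + B_p·((1+τ)/2)^p and let a₀(τ) = C + D·∫_0^τ (1−s²)^{−1} ds, and set Q^0_p(τ) := (1+τ)·a_p'(τ) − p·a_p(τ) (with a₀ for p = 0). Then the one-sided limits lim_{τ→1⁻} ((1−τ)/(1+τ))·Q^0_p(τ) exist for every p ≥ 0 and equal D/2 when p = 0 and 0 for all p ≥ 1, with no regularity condition on D required. Consequently, the ℓ = 0 i⁰-cylinder logarithmic NP constant of the spin-0 field is {}^{ρ̃}N⁺_{0,0} = D_{0,0,0}/2, i.e. precisely the initial-data coefficient controlling the logarithmic singularity at the critical set. -/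
noncomputable section

open Filter Set intervalIntegral

lemma deriv_int_inv (τ : ℝ) (hτ : τ ∈ Set.Ioo (0:ℝ) 1) :
    HasDerivAt (fun t : ℝ => ∫ s in (0:ℝ)..t, (1 - s ^ 2)⁻¹) ((1 - τ ^ 2)⁻¹) τ := by
  obtain ⟨h0, h1⟩ := hτ
  have hcont : ContinuousOn (fun s : ℝ => (1 - s ^ 2)⁻¹) (Set.Icc (-(1/2) : ℝ) ((1+τ)/2)) := by
    apply ContinuousOn.inv₀
    · fun_prop
    · intro s hs
      obtain ⟨hs1, hs2⟩ := hs
      nlinarith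
  have hsub : Set.uIcc (0:ℝ) τ ⊆ Set.Icc (-(1/2) : ℝ) ((1+τ)/2) := by
    rw [Set.uIcc_of_le h0.le]
    intro s hs; exact ⟨by linarith [hs.1], by linarith [hs.2]⟩
  have hint : IntervalIntegrable (fun s : ℝ => (1 - s ^ 2)⁻¹) MeasureTheory.volume 0 τ :=
    (hcont.mono hsub).intervalIntegrable
  have hca : ContinuousAt (fun s : ℝ => (1 - s ^ 2)⁻¹) τ := by
    apply ContinuousAt.inv₀ (by fun_prop)
    nlinarith
  have hm : StronglyMeasurableAtFilter (fun s : ℝ => (1 - s ^ 2)⁻¹) (nhds τ)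
      MeasureTheory.volume :=
    ⟨Set.univ, Filter.univ_mem,
      ((measurable_const.sub (measurable_id.pow_const 2)).inv).aestronglyMeasurable.restrict⟩
  exact intervalIntegral.integral_hasDerivAt_right hint hm hca

/-- The `ℓ = 0` i⁰-cylinder logarithmic NP constant: with
`a₀(τ) = C + D∫_0^τ (1-s²)⁻¹ ds` and `a_p(τ) = A_p((1-τ)/2)^p + B_p((1+τ)/2)^p` for
`p ≥ 1`, the one-sided limits as `τ → 1⁻` of `((1-τ)/(1+τ))·Q⁰_p(τ)`, where
`Q⁰_p(τ) = (1+τ)a_p'(τ) - p·a_p(τ)`, exist for every `p ≥ 0` and equal `D/2` when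
`p = 0` and `0` for all `p ≥ 1`, with no regularity condition on `D` required;
hence `{}^{ρ̃}N⁺₀₀ = D/2`, precisely the coefficient controlling the logarithmic
singularity at the critical set. -/
theorem logarithmic_NP_constant_ell_zero
    (A B : ℕ → ℝ) (C D : ℝ) (a : ℕ → ℝ → ℝ)
    (ha0 : a 0 = fun τ => C + D * ∫ s in (0 : ℝ)..τ, (1 - s ^ 2)⁻¹)
    (hap : ∀ p : ℕ, 1 ≤ p → a p = fun τ =>
      A p * ((1 - τ) / 2) ^ p + B p * ((1 + τ) / 2) ^ p) :
    ∀ p : ℕ,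
      Filter.Tendsto
        (fun τ : ℝ => ((1 - τ) / (1 + τ)) * ((1 + τ) * deriv (a p) τ - (p : ℝ) * a p τ))
        (nhdsWithin 1 (Set.Iio 1))
        (nhds (if p = 0 then D / 2 else 0)) := by
  intro p
  rcases Nat.eq_zero_or_pos p with hp | hp
  · subst hp
    simp only [if_pos rfl]
    -- eventual equality with D / (1 + τ)
    have hmem : Set.Ioo (0:ℝ) 1 ∈ nhdsWithin (1:ℝ) (Set.Iio 1) := by
      rw [← Set.Iio_inter_Ioi]
      exact Filter.inter_mem self_mem_nhdsWithin
        (mem_nhdsWithin_of_mem_nhds (Ioi_mem_nhds (by norm_num)))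
    have heq : ∀ᶠ τ in nhdsWithin (1:ℝ) (Set.Iio 1),
        ((1 - τ) / (1 + τ)) * ((1 + τ) * deriv (a 0) τ - ((0:ℕ) : ℝ) * a 0 τ)
          = D / (1 + τ) := by
      filter_upwards [hmem] with τ hτ
      have hd : deriv (a 0) τ = D * (1 - τ ^ 2)⁻¹ := by
        rw [ha0]
        have h := (hasDerivAt_const τ C).add ((deriv_int_inv τ hτ).const_mul D)
        exact h.deriv.trans (zero_add _)
      rw [hd]
      have h1 : (1:ℝ) - τ ≠ 0 := by linarith [hτ.2]
      have h2 : (1:ℝ) + τ ≠ 0 := by linarith [hτ.1]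
      have h3 : (1:ℝ) - τ ^ 2 = (1 - τ) * (1 + τ) := by ring
      field_simp [h3]
      ring
    have hlim : Filter.Tendsto (fun τ : ℝ => D / (1 + τ))
        (nhdsWithin (1:ℝ) (Set.Iio 1)) (nhds (D / 2)) := by
      have : ContinuousAt (fun τ : ℝ => D / (1 + τ)) 1 := by
        apply ContinuousAt.div (by fun_prop) (by fun_prop); norm_num
      have h := ContinuousAt.continuousWithinAt (s := Set.Iio 1) this
      rw [ContinuousWithinAt] at h
      norm_num at h
      exact h
    exact hlim.congr' (heq.mono fun _ h => h.symm)
  · simp only [if_neg (Nat.pos_iff_ne_zero.mp hp)]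
    rw [hap p hp]
    have hcd : ∀ τ : ℝ, HasDerivAt
        (fun τ : ℝ => A p * ((1 - τ) / 2) ^ p + B p * ((1 + τ) / 2) ^ p)
        (A p * ((p : ℝ) * ((1 - τ) / 2) ^ (p - 1) * (-(1/2)))
          + B p * ((p : ℝ) * ((1 + τ) / 2) ^ (p - 1) * (1/2))) τ := by
      intro τ
      have h1 : HasDerivAt (fun τ : ℝ => (1 - τ) / 2) (-(1/2)) τ := by
        have := ((hasDerivAt_id τ).const_sub 1).div_const 2
        rw [show (-(1/2):ℝ) = -1/2 by norm_num]; exact this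
      have h2 : HasDerivAt (fun τ : ℝ => (1 + τ) / 2) (1/2) τ := by
        have := ((hasDerivAt_id τ).const_add 1).div_const 2
        exact this
      exact ((h1.pow p).const_mul (A p)).add ((h2.pow p).const_mul (B p))
    have hde : (fun τ : ℝ => ((1 - τ) / (1 + τ)) *
        ((1 + τ) * deriv (fun τ : ℝ => A p * ((1 - τ) / 2) ^ p + B p * ((1 + τ) / 2) ^ p) τ
          - (p : ℝ) * (A p * ((1 - τ) / 2) ^ p + B p * ((1 + τ) / 2) ^ p)))
        = fun τ : ℝ => ((1 - τ) / (1 + τ)) *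
        ((1 + τ) * (A p * ((p : ℝ) * ((1 - τ) / 2) ^ (p - 1) * (-(1/2)))
          + B p * ((p : ℝ) * ((1 + τ) / 2) ^ (p - 1) * (1/2)))
          - (p : ℝ) * (A p * ((1 - τ) / 2) ^ p + B p * ((1 + τ) / 2) ^ p)) := by
      funext τ; rw [(hcd τ).deriv]
    rw [hde]
    have hct : ContinuousAt (fun τ : ℝ => ((1 - τ) / (1 + τ)) *
        ((1 + τ) * (A p * ((p : ℝ) * ((1 - τ) / 2) ^ (p - 1) * (-(1/2)))
          + B p * ((p : ℝ) * ((1 + τ) / 2) ^ (p - 1) * (1/2)))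
          - (p : ℝ) * (A p * ((1 - τ) / 2) ^ p + B p * ((1 + τ) / 2) ^ p))) 1 := by
      apply ContinuousAt.mul
      · exact ContinuousAt.div (by fun_prop) (by fun_prop) (by norm_num)
      · fun_prop
    have := ContinuousAt.continuousWithinAt (s := Set.Iio 1) hct
    have hval : ((1 - (1:ℝ)) / (1 + 1)) *
        ((1 + (1:ℝ)) * (A p * ((p : ℝ) * ((1 - 1) / 2) ^ (p - 1) * (-(1/2)))
          + B p * ((p : ℝ) * ((1 + 1) / 2) ^ (p - 1) * (1/2)))
          - (p : ℝ) * (A p * ((1 - 1) / 2) ^ p + B p * ((1 + 1) / 2) ^ p)) = 0 := by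
      norm_num
    rw [ContinuousWithinAt] at this
    rw [hval] at this
    exact this
end
end

section
/- Fix real constants A_p (p ≥ 2), B_p (p ≥ 2), C. For p ≥ 2 let a_p(τ) = A_p·((1−τ)/2)^p·(τ+p) + B_p·((1+τ)/2)^p·(τ−p) and let a₁(τ) = ((1−τ²)/4)·C (the ℓ = 1, p = 1 solution with the regularity condition D = 0 imposed), and set Q^1_p(τ) := (1+τ)²·a_p''(τ) − 2p(1+τ)·a_p'(τ) + p(p+1)·a_p(τ). Then the one-sided limits lim_{τ→1⁻} Q^1_p(τ) exist for every p ≥ 1 and equal 6·A₂ when p = 2 and 0 for all p ≠ 2. Consequently, the classical ℓ = 1 Newman–Penrose constants of the spin-0 field are N⁺_{1,m} = 3·A_{2,1,m}, depending only on the initial-data parameters A_{2,1,m} and independent of the cut of future null infinity. -/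
noncomputable section

/-- The classical `ℓ = 1` Newman–Penrose constants: with the regularity condition
`D = 0` imposed (`a₁ = ((1-τ²)/4)·C`), and
`a_p(τ) = A_p((1-τ)/2)^p(τ+p) + B_p((1+τ)/2)^p(τ-p)` for `p ≥ 2`, the one-sided limits
as `τ → 1⁻` of `Q¹_p(τ) = (1+τ)²a_p'' - 2p(1+τ)a_p' + p(p+1)a_p` exist for every `p ≥ 1`
and equal `6A₂` when `p = 2` and `0` for all `p ≠ 2`; hence `N⁺₁ₘ = 3A₂`, depending only
on `A₂` and independent of the cut of future null infinity. -/
theorem classical_NP_constant_ell_one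
    (A B : ℕ → ℝ) (C : ℝ) (a : ℕ → ℝ → ℝ)
    (ha1 : a 1 = fun τ => ((1 - τ ^ 2) / 4) * C)
    (hap : ∀ p : ℕ, 2 ≤ p → a p = fun τ =>
      A p * ((1 - τ) / 2) ^ p * (τ + (p : ℝ)) + B p * ((1 + τ) / 2) ^ p * (τ - (p : ℝ))) :
    ∀ p : ℕ, 1 ≤ p →
      Filter.Tendsto
        (fun τ : ℝ => (1 + τ) ^ 2 * deriv (deriv (a p)) τ
          - 2 * (p : ℝ) * (1 + τ) * deriv (a p) τ
          + (p : ℝ) * ((p : ℝ) + 1) * a p τ)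
        (nhdsWithin 1 (Set.Iio 1))
        (nhds (if p = 2 then 6 * A 2 else 0)) := by
  have hu : ∀ τ : ℝ, HasDerivAt (fun τ : ℝ => (1 - τ) / 2) (-1 / 2) τ := by
    intro τ
    exact ((hasDerivAt_id τ).const_sub 1).div_const 2
  have hv : ∀ τ : ℝ, HasDerivAt (fun τ : ℝ => (1 + τ) / 2) (1 / 2) τ := by
    intro τ
    have := ((hasDerivAt_id τ).const_add 1).div_const 2
    exact this
  intro p hp
  rcases Nat.lt_or_ge p 2 with h | h
  · -- p = 1
    have hp1 : p = 1 := by omega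
    subst hp1
    have hd1 : ∀ τ : ℝ, HasDerivAt (a 1) (-(τ / 2) * C) τ := by
      intro τ
      rw [ha1]
      have h0 : HasDerivAt (fun τ : ℝ => ((1 - τ ^ 2) / 4) * C)
          ((-((2 : ℕ) * τ ^ (2 - 1)) / 4) * C) τ :=
        (((hasDerivAt_pow 2 τ).const_sub 1).div_const 4).mul_const C
      rw [show -(τ / 2) * C = (-(((2 : ℕ) : ℝ) * τ ^ (2 - 1)) / 4) * C by push_cast; ring]
      exact h0
    have hd2 : ∀ τ : ℝ, HasDerivAt (fun τ : ℝ => -(τ / 2) * C) (-(1 / 2) * C) τ := by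
      intro τ
      exact (((hasDerivAt_id τ).div_const 2).neg).mul_const C
    have hD1 : deriv (a 1) = fun τ => -(τ / 2) * C := funext fun τ => (hd1 τ).deriv
    have hD2 : deriv (deriv (a 1)) = fun _ : ℝ => -(1 / 2) * C := by
      rw [hD1]; exact funext fun τ => (hd2 τ).deriv
    rw [hD2, hD1, ha1]
    refine Filter.Tendsto.mono_left ?_ nhdsWithin_le_nhds
    refine Continuous.tendsto' (by fun_prop) 1 _ ?_
    norm_num
  · -- p ≥ 2
    obtain ⟨q, rfl⟩ : ∃ q, p = q + 2 := ⟨p - 2, by omega⟩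
    have hq2 : (2 : ℕ) ≤ q + 2 := by omega
    set Aq := A (q + 2) with hAq
    set Bq := B (q + 2) with hBq
    -- first and second derivative candidates
    set f1 : ℝ → ℝ := fun τ =>
      Aq * (-((((q : ℝ) + 2)) / 2) * ((1 - τ) / 2) ^ (q + 1) * (τ + ((q : ℝ) + 2))
              + ((1 - τ) / 2) ^ (q + 2))
      + Bq * (((((q : ℝ) + 2)) / 2) * ((1 + τ) / 2) ^ (q + 1) * (τ - ((q : ℝ) + 2))
              + ((1 + τ) / 2) ^ (q + 2)) with hf1
    set f2 : ℝ → ℝ := fun τ =>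
      Aq * ((((q : ℝ) + 2) * (((q : ℝ) + 2) - 1) / 4) * ((1 - τ) / 2) ^ q * (τ + ((q : ℝ) + 2))
              - (((q : ℝ) + 2)) * ((1 - τ) / 2) ^ (q + 1))
      + Bq * ((((q : ℝ) + 2) * (((q : ℝ) + 2) - 1) / 4) * ((1 + τ) / 2) ^ q * (τ - ((q : ℝ) + 2))
              + (((q : ℝ) + 2)) * ((1 + τ) / 2) ^ (q + 1)) with hf2
    have hd1 : ∀ τ : ℝ, HasDerivAt (a (q + 2)) (f1 τ) τ := by
      intro τ
      rw [hap (q + 2) hq2]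
      have hA : HasDerivAt (fun τ : ℝ => Aq * ((1 - τ) / 2) ^ (q + 2) * (τ + ((q + 2 : ℕ) : ℝ)))
          ((Aq * (((q + 2 : ℕ) : ℝ) * ((1 - τ) / 2) ^ (q + 2 - 1) * (-1 / 2))) * (τ + ((q + 2 : ℕ) : ℝ))
            + (Aq * ((1 - τ) / 2) ^ (q + 2)) * 1) τ :=
        (((hu τ).pow (q + 2)).const_mul Aq).mul ((hasDerivAt_id τ).add_const _)
      have hB : HasDerivAt (fun τ : ℝ => Bq * ((1 + τ) / 2) ^ (q + 2) * (τ - ((q + 2 : ℕ) : ℝ)))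
          ((Bq * (((q + 2 : ℕ) : ℝ) * ((1 + τ) / 2) ^ (q + 2 - 1) * (1 / 2))) * (τ - ((q + 2 : ℕ) : ℝ))
            + (Bq * ((1 + τ) / 2) ^ (q + 2)) * 1) τ :=
        (((hv τ).pow (q + 2)).const_mul Bq).mul ((hasDerivAt_id τ).sub_const _)
      have hsum := hA.add hB
      rw [show f1 τ =
          ((Aq * (((q + 2 : ℕ) : ℝ) * ((1 - τ) / 2) ^ (q + 2 - 1) * (-1 / 2))) * (τ + ((q + 2 : ℕ) : ℝ))
            + (Aq * ((1 - τ) / 2) ^ (q + 2)) * 1)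
          + ((Bq * (((q + 2 : ℕ) : ℝ) * ((1 + τ) / 2) ^ (q + 2 - 1) * (1 / 2))) * (τ - ((q + 2 : ℕ) : ℝ))
            + (Bq * ((1 + τ) / 2) ^ (q + 2)) * 1) from by
        rw [hf1]; push_cast [show q + 2 - 1 = q + 1 from rfl]; ring]
      exact hsum
    have hd2 : ∀ τ : ℝ, HasDerivAt f1 (f2 τ) τ := by
      intro τ
      have hA : HasDerivAt
          (fun τ : ℝ => Aq * (-((((q : ℝ) + 2)) / 2) * ((1 - τ) / 2) ^ (q + 1) * (τ + ((q : ℝ) + 2))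
              + ((1 - τ) / 2) ^ (q + 2)))
          (Aq * ((((-((((q : ℝ) + 2)) / 2)) * (((q + 1 : ℕ) : ℝ) * ((1 - τ) / 2) ^ (q + 1 - 1) * (-1 / 2))) * (τ + ((q : ℝ) + 2))
              + ((-((((q : ℝ) + 2)) / 2)) * ((1 - τ) / 2) ^ (q + 1)) * 1)
            + ((q + 2 : ℕ) : ℝ) * ((1 - τ) / 2) ^ (q + 2 - 1) * (-1 / 2))) τ :=
        (((((hu τ).pow (q + 1)).const_mul _).mul ((hasDerivAt_id τ).add_const _)).add
          ((hu τ).pow (q + 2))).const_mul Aq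
      have hB : HasDerivAt
          (fun τ : ℝ => Bq * (((((q : ℝ) + 2)) / 2) * ((1 + τ) / 2) ^ (q + 1) * (τ - ((q : ℝ) + 2))
              + ((1 + τ) / 2) ^ (q + 2)))
          (Bq * (((((((q : ℝ) + 2)) / 2) * (((q + 1 : ℕ) : ℝ) * ((1 + τ) / 2) ^ (q + 1 - 1) * (1 / 2))) * (τ - ((q : ℝ) + 2))
              + (((((q : ℝ) + 2)) / 2) * ((1 + τ) / 2) ^ (q + 1)) * 1)
            + ((q + 2 : ℕ) : ℝ) * ((1 + τ) / 2) ^ (q + 2 - 1) * (1 / 2))) τ :=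
        (((((hv τ).pow (q + 1)).const_mul _).mul ((hasDerivAt_id τ).sub_const _)).add
          ((hv τ).pow (q + 2))).const_mul Bq
      have hsum := hA.add hB
      rw [show f2 τ =
          (Aq * ((((-((((q : ℝ) + 2)) / 2)) * (((q + 1 : ℕ) : ℝ) * ((1 - τ) / 2) ^ (q + 1 - 1) * (-1 / 2))) * (τ + ((q : ℝ) + 2))
              + ((-((((q : ℝ) + 2)) / 2)) * ((1 - τ) / 2) ^ (q + 1)) * 1)
            + ((q + 2 : ℕ) : ℝ) * ((1 - τ) / 2) ^ (q + 2 - 1) * (-1 / 2)))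
          + (Bq * (((((((q : ℝ) + 2)) / 2) * (((q + 1 : ℕ) : ℝ) * ((1 + τ) / 2) ^ (q + 1 - 1) * (1 / 2))) * (τ - ((q : ℝ) + 2))
              + (((((q : ℝ) + 2)) / 2) * ((1 + τ) / 2) ^ (q + 1)) * 1)
            + ((q + 2 : ℕ) : ℝ) * ((1 + τ) / 2) ^ (q + 2 - 1) * (1 / 2))) from by
        rw [hf2]
        push_cast [show q + 1 - 1 = q from rfl, show q + 2 - 1 = q + 1 from rfl]
        ring]
      exact hsum
    have hD1 : deriv (a (q + 2)) = f1 := funext fun τ => (hd1 τ).deriv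
    have hD2 : deriv (deriv (a (q + 2))) = f2 := by
      rw [hD1]; exact funext fun τ => (hd2 τ).deriv
    rw [hD2, hD1, hap (q + 2) hq2]
    refine Filter.Tendsto.mono_left ?_ nhdsWithin_le_nhds
    refine Continuous.tendsto' (by rw [hf1, hf2]; fun_prop) 1 _ ?_
    rcases q with _ | n
    · rw [if_pos rfl, hf1, hf2, ← hAq, ← hBq]
      norm_num
      ring
    · rw [if_neg (by omega), hf1, hf2]
      push_cast
      norm_num [zero_pow]
      ring
end
end

section
/- Fix real constants A_p (p ≥ 2), B_p (p ≥ 2), C, D. For p ≥ 2 let a_p(τ) = A_p·((1−τ)/2)^p·(τ+p) + B_p·((1+τ)/2)^p·(τ−p) and let a₁(τ) = ((1−τ²)/4)·( C + D·∫_0^τ (1−s²)^{−2} ds ), and set Q^1_p(τ) := (1+τ)²·a_p''(τ) − 2p(1+τ)·a_p'(τ) + p(p+1)·a_p(τ). Then the one-sided limits lim_{τ→1⁻} ((1−τ)/(1+τ))·Q^1_p(τ) exist for every p ≥ 1 and equal −D/4 when p = 1 and 0 for all p ≥ 2, with no regularity condition on D required. Consequently, the ℓ = 1 i⁰-cylinder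 logarithmic NP constants of the spin-0 field are {}^{ρ̃}N⁺_{1,m} = −D_{1,1,m}/4. -/
noncomputable section
set_option maxHeartbeats 1600000

open Set Filter intervalIntegral

/-- The `ℓ = 1` i⁰-cylinder logarithmic NP constants: with
`a₁(τ) = ((1-τ²)/4)(C + D∫_0^τ (1-s²)^{-2} ds)` and
`a_p(τ) = A_p((1-τ)/2)^p(τ+p) + B_p((1+τ)/2)^p(τ-p)` for `p ≥ 2`, the one-sided limits
as `τ → 1⁻` of `((1-τ)/(1+τ))·Q¹_p(τ)`, where
`Q¹_p(τ) = (1+τ)²a_p'' - 2p(1+τ)a_p' + p(p+1)a_p`, exist for every `p ≥ 1` and equal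
`-D/4` when `p = 1` and `0` for all `p ≥ 2`, with no regularity condition on `D`
required; hence `{}^{ρ̃}N⁺₁ₘ = -D/4`. -/
theorem logarithmic_NP_constant_ell_one
    (A B : ℕ → ℝ) (C D : ℝ) (a : ℕ → ℝ → ℝ)
    (ha1 : a 1 = fun τ => ((1 - τ ^ 2) / 4) *
      (C + D * ∫ s in (0 : ℝ)..τ, ((1 - s ^ 2) ^ 2)⁻¹))
    (hap : ∀ p : ℕ, 2 ≤ p → a p = fun τ =>
      A p * ((1 - τ) / 2) ^ p * (τ + (p : ℝ)) + B p * ((1 + τ) / 2) ^ p * (τ - (p : ℝ))) :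
    ∀ p : ℕ, 1 ≤ p →
      Filter.Tendsto
        (fun τ : ℝ => ((1 - τ) / (1 + τ)) *
          ((1 + τ) ^ 2 * deriv (deriv (a p)) τ
            - 2 * (p : ℝ) * (1 + τ) * deriv (a p) τ
            + (p : ℝ) * ((p : ℝ) + 1) * a p τ))
        (nhdsWithin 1 (Set.Iio 1))
        (nhds (if p = 1 then -D / 4 else 0)) := by
  intro p hp
  by_cases hp1 : p = 1
  · subst hp1
    -- the p = 1 case
    set I : ℝ → ℝ := fun t => ∫ s in (0 : ℝ)..t, ((1 - s ^ 2) ^ 2)⁻¹ with hI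
    have hne : ∀ s ∈ Set.Ioo (-1 : ℝ) 1, (1 - s ^ 2) ≠ 0 := by
      intro s hs
      nlinarith [hs.1, hs.2]
    have hderivI : ∀ τ ∈ Set.Ioo (-1 : ℝ) 1,
        HasDerivAt I (((1 - τ ^ 2) ^ 2)⁻¹) τ := by
      intro τ hτ
      have hsub : Set.uIcc (0 : ℝ) τ ⊆ Set.Ioo (-1 : ℝ) 1 :=
        Set.ordConnected_Ioo.uIcc_subset (by constructor <;> norm_num) hτ
      have hcontOn : ContinuousOn (fun s : ℝ => ((1 - s ^ 2) ^ 2)⁻¹) (Set.uIcc (0:ℝ) τ) := by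
        apply ContinuousOn.inv₀ (by fun_prop)
        intro s hs
        exact pow_ne_zero 2 (hne s (hsub hs))
      have hint : IntervalIntegrable (fun s : ℝ => ((1 - s ^ 2) ^ 2)⁻¹) MeasureTheory.volume 0 τ :=
        hcontOn.intervalIntegrable
      have hmeas : StronglyMeasurableAtFilter (fun s : ℝ => ((1 - s ^ 2) ^ 2)⁻¹)
          (nhds τ) := by
        have : Measurable fun s : ℝ => ((1 - s ^ 2) ^ 2)⁻¹ := by measurability
        exact this.stronglyMeasurable.stronglyMeasurableAtFilter
      have hcont : ContinuousAt (fun s : ℝ => ((1 - s ^ 2) ^ 2)⁻¹) τ :=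
        ContinuousAt.inv₀ (by fun_prop) (pow_ne_zero 2 (hne τ hτ))
      exact intervalIntegral.integral_hasDerivAt_right hint hmeas hcont
    set h : ℝ → ℝ := fun t => (-t / 2) * (C + D * I t) + (D / 4) * (1 - t ^ 2)⁻¹ with hh
    have hderiva : ∀ τ ∈ Set.Ioo (-1 : ℝ) 1, HasDerivAt (a 1) (h τ) τ := by
      intro τ hτ
      have h0 := hne τ hτ
      have hu : HasDerivAt (fun t : ℝ => (1 - t ^ 2) / 4) (-τ / 2) τ := by
        have := (((hasDerivAt_pow 2 τ).const_sub 1).div_const 4)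
        convert this using 1
        · rfl
        · rfl
        · norm_num
          ring
      have hg : HasDerivAt (fun t : ℝ => C + D * I t) (D * ((1 - τ ^ 2) ^ 2)⁻¹) τ :=
        ((hderivI τ hτ).const_mul D).const_add C
      rw [ha1]
      refine (hu.mul hg).congr_deriv ?_
      symm
      rw [hh]
      set G := C + D * I τ with hG
      field_simp
      ring
    have hderivh : ∀ τ ∈ Set.Ioo (-1 : ℝ) 1, HasDerivAt h (-(C + D * I τ) / 2) τ := by
      intro τ hτ
      have h0 := hne τ hτ
      have hg : HasDerivAt (fun t : ℝ => C + D * I t) (D * ((1 - τ ^ 2) ^ 2)⁻¹) τ :=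
        ((hderivI τ hτ).const_mul D).const_add C
      have h1 : HasDerivAt (fun t : ℝ => -t / 2) (-1 / 2) τ :=
        (hasDerivAt_id τ).neg.div_const 2
      have h2 : HasDerivAt (fun t : ℝ => (1 - t ^ 2)) (-(2 * τ ^ 1)) τ :=
        (hasDerivAt_pow 2 τ).const_sub 1
      have h3 := (h2.inv h0).const_mul (D / 4)
      have h4 := (h1.mul hg).add h3
      refine h4.congr_deriv ?_
      symm
      set G := C + D * I τ with hG
      field_simp
      ring
    -- rewrite the function on Ioo (-1) 1
    have key : ∀ τ ∈ Set.Ioo (-1 : ℝ) 1,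
        ((1 - τ) / (1 + τ)) *
          ((1 + τ) ^ 2 * deriv (deriv (a 1)) τ
            - 2 * ((1:ℕ) : ℝ) * (1 + τ) * deriv (a 1) τ
            + ((1:ℕ) : ℝ) * (((1:ℕ) : ℝ) + 1) * a 1 τ)
        = -D / (2 * (1 + τ)) := by
      intro τ hτ
      have h0 := hne τ hτ
      have hm : (1 + τ) ≠ 0 := by nlinarith [hτ.1, hτ.2]
      have hm' : (1 - τ) ≠ 0 := by nlinarith [hτ.1, hτ.2]
      have e1 : deriv (a 1) τ = h τ := (hderiva τ hτ).deriv
      have e2 : deriv (deriv (a 1)) τ = -(C + D * I τ) / 2 := by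
        have heq : deriv (a 1) =ᶠ[nhds τ] h :=
          Filter.eventuallyEq_of_mem (isOpen_Ioo.mem_nhds hτ)
            (fun t ht => (hderiva t ht).deriv)
        rw [heq.deriv_eq]
        exact (hderivh τ hτ).deriv
      have ea : a 1 τ = ((1 - τ ^ 2) / 4) * (C + D * I τ) := by rw [ha1]
      rw [e1, e2, ea, hh]
      push_cast
      set G := C + D * I τ with hG
      field_simp
      ring
    have hmem : Set.Ioo (-1 : ℝ) 1 ∈ nhdsWithin 1 (Set.Iio 1) := by
      rw [← Set.Ioi_inter_Iio]
      exact Filter.inter_mem (nhdsWithin_le_nhds (Ioi_mem_nhds (by norm_num)))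
        self_mem_nhdsWithin
    have heq : (fun τ : ℝ => -D / (2 * (1 + τ))) =ᶠ[nhdsWithin 1 (Set.Iio 1)]
        (fun τ : ℝ => ((1 - τ) / (1 + τ)) *
          ((1 + τ) ^ 2 * deriv (deriv (a 1)) τ
            - 2 * ((1:ℕ) : ℝ) * (1 + τ) * deriv (a 1) τ
            + ((1:ℕ) : ℝ) * (((1:ℕ) : ℝ) + 1) * a 1 τ)) :=
      Filter.eventually_of_mem hmem (fun τ hτ => (key τ hτ).symm)
    have hlim : Filter.Tendsto (fun τ : ℝ => -D / (2 * (1 + τ)))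
        (nhdsWithin 1 (Set.Iio 1)) (nhds (-D / 4)) := by
      have hc : ContinuousAt (fun τ : ℝ => -D / (2 * (1 + τ))) 1 := by
        apply ContinuousAt.div (by fun_prop) (by fun_prop)
        norm_num
      have := hc.tendsto.mono_left (nhdsWithin_le_nhds (s := Set.Iio 1))
      norm_num at this ⊢
      exact this
    simp only [if_pos rfl]
    exact hlim.congr' heq
  · -- the p ≥ 2 case
    have hp2 : 2 ≤ p := by omega
    rw [hap p hp2, if_neg hp1]
    set f : ℝ → ℝ := fun τ =>
      A p * ((1 - τ) / 2) ^ p * (τ + (p : ℝ)) + B p * ((1 + τ) / 2) ^ p * (τ - (p : ℝ)) with hf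
    have hsm : ContDiff ℝ (⊤ : ℕ∞) f := by
      apply ContDiff.add <;> apply ContDiff.mul
      · exact contDiff_const.mul (((contDiff_const.sub contDiff_id).div_const 2).pow p)
      · exact contDiff_id.add contDiff_const
      · exact contDiff_const.mul (((contDiff_const.add contDiff_id).div_const 2).pow p)
      · exact contDiff_id.sub contDiff_const
    have hsm' : ContDiff ℝ (⊤ : ℕ∞) f := hsm.of_le (by simp)
    have hd1 : ContDiff ℝ (⊤ : ℕ∞) (deriv f) := (contDiff_infty_iff_deriv.mp hsm').2
    have hd2 : Continuous (deriv (deriv f)) := (contDiff_infty_iff_deriv.mp hd1).2.continuous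
    have hc : ContinuousAt (fun τ : ℝ => ((1 - τ) / (1 + τ)) *
        ((1 + τ) ^ 2 * deriv (deriv f) τ
          - 2 * (p : ℝ) * (1 + τ) * deriv f τ
          + (p : ℝ) * ((p : ℝ) + 1) * f τ)) 1 := by
      apply ContinuousAt.mul
      · exact ContinuousAt.div (by fun_prop) (by fun_prop) (by norm_num)
      · apply ContinuousAt.add
        · apply ContinuousAt.sub
          · exact ContinuousAt.mul (by fun_prop) hd2.continuousAt
          · exact ContinuousAt.mul (by fun_prop)
              (hd1.continuous.continuousAt)
        · exact ContinuousAt.mul continuousAt_const (hsm.continuous.continuousAt)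
      
    have := hc.tendsto.mono_left (nhdsWithin_le_nhds (s := Set.Iio 1))
    norm_num at this
    convert this using 2
end
end

section
/- Let ℓ ≥ 0 be an integer and let φ, S be smooth real functions on the region {(t,r) ∈ ℝ² : r > 0}. Define L := ∂_t + ∂_r, L̲ := ∂_t − ∂_r, and (Eψ)(t,r) := r²·(Lψ)(t,r). Suppose φ satisfies (L̲ L φ)(t,r) = r^{−2}·( −ℓ(ℓ+1)·φ(t,r) − S(t,r) ) on the region. Then the exact conservation law L̲( r^{−2ℓ}·L E^ℓ φ )(t,r) = −r^{−2(ℓ+1)}·(E^ℓ S)(t,r) holds at every point with r > 0. In particular, in the source-free case S = 0, the quantity r^{−2ℓ}·L E^ℓ φ is constant along incoming null lines (i.e. annihilated by L̲), which is the conservation law underlying the Newman–Penrose constants for the spin-0 field. -/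
noncomputable section

/-- Outgoing radial null derivative `L = ∂_t + ∂_r`. -/
def Lop (ψ : ℝ → ℝ → ℝ) : ℝ → ℝ → ℝ :=
  fun t r => deriv (fun t' => ψ t' r) t + deriv (ψ t) r

/-- Incoming radial null derivative `L̲ = ∂_t - ∂_r`. -/
def Lbar (ψ : ℝ → ℝ → ℝ) : ℝ → ℝ → ℝ :=
  fun t r => deriv (fun t' => ψ t' r) t - deriv (ψ t) r

/-- The operator `E = r²L`, the physical-coordinate form of the outgoing NP null vector. -/
def Eop (ψ : ℝ → ℝ → ℝ) : ℝ → ℝ → ℝ :=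
  fun t r => r ^ 2 * Lop ψ t r

namespace NPaux
open Filter

def U : Set (ℝ × ℝ) := {q : ℝ × ℝ | 0 < q.2}
lemma isOpen_U : IsOpen U := isOpen_lt continuous_const continuous_snd
def Dv (v : ℝ × ℝ) (g : ℝ × ℝ → ℝ) : ℝ × ℝ → ℝ := fun q => fderiv ℝ g q v
abbrev Sm (g : ℝ × ℝ → ℝ) : Prop := ContDiffOn ℝ (⊤ : ℕ∞) g U

lemma Sm.diffAt {g} (hg : Sm g) {q} (hq : q ∈ U) : DifferentiableAt ℝ g q :=
  (hg.contDiffAt (isOpen_U.mem_nhds hq)).differentiableAt (by simp)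

lemma Sm.dv {g} (hg : Sm g) (v) : Sm (Dv v g) :=
  (hg.fderiv_of_isOpen isOpen_U (by simp)).clm_apply contDiffOn_const

lemma Dv_congr {g h} (hgh : Set.EqOn g h U) (v) {q} (hq : q ∈ U) : Dv v g q = Dv v h q := by
  unfold Dv
  rw [Filter.EventuallyEq.fderiv_eq (hgh.eventuallyEq_of_mem (isOpen_U.mem_nhds hq))]

lemma Dv_dv {g : ℝ × ℝ → ℝ} {q} (hd : DifferentiableAt ℝ (fderiv ℝ g) q) (v w : ℝ × ℝ) :
    Dv v (Dv w g) q = fderiv ℝ (fderiv ℝ g) q v w := by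
  have h : HasFDerivAt (fun p => fderiv ℝ g p w)
      ((ContinuousLinearMap.apply ℝ ℝ w).comp (fderiv ℝ (fderiv ℝ g) q)) q :=
    (ContinuousLinearMap.apply ℝ ℝ w).hasFDerivAt.comp q hd.hasFDerivAt
  show fderiv ℝ (fun p => fderiv ℝ g p w) q v = _
  rw [h.fderiv]; rfl

lemma Dv_comm {g} (hg : Sm g) {q} (hq : q ∈ U) (v w) :
    Dv v (Dv w g) q = Dv w (Dv v g) q := by
  have hca : ContDiffAt ℝ (⊤ : ℕ∞) g q := hg.contDiffAt (isOpen_U.mem_nhds hq)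
  have hsym := hca.isSymmSndFDerivAt (by simp [minSmoothness_of_isRCLikeNormedField]; exact WithTop.coe_le_coe.mpr (le_top : (2:ℕ∞) ≤ ⊤))
  have hd : DifferentiableAt ℝ (fderiv ℝ g) q :=
    (hca.fderiv_right (m := 1) (WithTop.coe_le_coe.mpr le_top)).differentiableAt one_ne_zero
  rw [Dv_dv hd, Dv_dv hd, hsym v w]

lemma Dv_mul {a b : ℝ × ℝ → ℝ} {q} (ha : DifferentiableAt ℝ a q)
    (hb : DifferentiableAt ℝ b q) (v) :
    Dv v (fun p => a p * b p) q = Dv v a q * b q + a q * Dv v b q := by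
  unfold Dv
  rw [fderiv_fun_mul ha hb]
  simp [mul_comm]
  ring

lemma Dv_add {a b : ℝ × ℝ → ℝ} {q} (ha : DifferentiableAt ℝ a q)
    (hb : DifferentiableAt ℝ b q) (v) :
    Dv v (fun p => a p + b p) q = Dv v a q + Dv v b q := by
  unfold Dv; rw [fderiv_fun_add ha hb]; rfl

lemma Dv_cmul {a : ℝ × ℝ → ℝ} {q} (c : ℝ) (ha : DifferentiableAt ℝ a q) (v) :
    Dv v (fun p => c * a p) q = c * Dv v a q := by
  unfold Dv; rw [fderiv_const_mul ha]; rfl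

lemma Dv_cmul_sub {a b : ℝ × ℝ → ℝ} {q} (c : ℝ) (ha : DifferentiableAt ℝ a q)
    (hb : DifferentiableAt ℝ b q) (v) :
    Dv v (fun p => c * a p - b p) q = c * Dv v a q - Dv v b q := by
  unfold Dv
  rw [fderiv_fun_sub (ha.const_mul c) hb, fderiv_const_mul ha]
  simp

lemma hasFDerivAt_pow_snd (n : ℕ) (q : ℝ × ℝ) :
    HasFDerivAt (fun p : ℝ × ℝ => p.2 ^ n)
      ((n * q.2 ^ (n - 1)) • ContinuousLinearMap.snd ℝ ℝ ℝ) q :=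
  (hasDerivAt_pow n q.2).comp_hasFDerivAt q hasFDerivAt_snd

lemma Dv_pow_snd (n : ℕ) (v : ℝ × ℝ) (q : ℝ × ℝ) :
    Dv v (fun p : ℝ × ℝ => p.2 ^ n) q = n * q.2 ^ (n - 1) * v.2 := by
  unfold Dv; rw [(hasFDerivAt_pow_snd n q).fderiv]; simp [mul_assoc]

lemma diffAt_pow_snd (n : ℕ) (q : ℝ × ℝ) :
    DifferentiableAt ℝ (fun p : ℝ × ℝ => p.2 ^ n) q :=
  (hasFDerivAt_pow_snd n q).differentiableAt

lemma hasFDerivAt_invpow_snd (n : ℕ) {q : ℝ × ℝ} (hq : q.2 ≠ 0) :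
    HasFDerivAt (fun p : ℝ × ℝ => (p.2 ^ n)⁻¹)
      ((-(n * q.2 ^ (n - 1)) / (q.2 ^ n) ^ 2) • ContinuousLinearMap.snd ℝ ℝ ℝ) q :=
  ((hasDerivAt_pow n q.2).inv (pow_ne_zero n hq)).comp_hasFDerivAt q hasFDerivAt_snd

lemma diffAt_invpow_snd (n : ℕ) {q : ℝ × ℝ} (hq : q.2 ≠ 0) :
    DifferentiableAt ℝ (fun p : ℝ × ℝ => (p.2 ^ n)⁻¹) q :=
  (hasFDerivAt_invpow_snd n hq).differentiableAt

lemma Dv_invpow_snd (n : ℕ) (v : ℝ × ℝ) {q : ℝ × ℝ} (hq : q.2 ≠ 0) :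
    Dv v (fun p : ℝ × ℝ => (p.2 ^ n)⁻¹) q = -(n : ℝ) * (q.2 ^ (n + 1))⁻¹ * v.2 := by
  unfold Dv
  rw [(hasFDerivAt_invpow_snd n hq).fderiv]
  rcases n with _ | m
  · simp
  · have h1 : q.2 ^ (m + 1) ≠ 0 := pow_ne_zero _ hq
    simp only [ContinuousLinearMap.coe_smul', Pi.smul_apply,
      ContinuousLinearMap.coe_snd', smul_eq_mul, Nat.add_sub_cancel]
    field_simp
    ring

lemma Sm_pow_snd (n : ℕ) : Sm (fun p : ℝ × ℝ => p.2 ^ n) :=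
  (contDiff_snd.pow n).contDiffOn

lemma Sm_invpow_snd (n : ℕ) : Sm (fun p : ℝ × ℝ => (p.2 ^ n)⁻¹) :=
  (Sm_pow_snd n).inv fun q hq => pow_ne_zero n (ne_of_gt hq)

def uu : ℝ × ℝ := (1, 1)
def ww : ℝ × ℝ := (1, -1)

def Est (g : ℝ × ℝ → ℝ) : ℝ × ℝ → ℝ := fun q => q.2 ^ 2 * Dv uu g q

lemma Sm.est {g} (hg : Sm g) : Sm (Est g) := (Sm_pow_snd 2).mul (hg.dv uu)

lemma Sm.estIter {g} (hg : Sm g) : ∀ k, Sm (Est^[k] g)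
  | 0 => hg
  | (k+1) => by rw [Function.iterate_succ_apply']; exact (hg.estIter k).est

lemma key (ℓ : ℕ) (f s : ℝ × ℝ → ℝ) (hf : Sm f) (hs : Sm s)
    (heq : ∀ q ∈ U, Dv ww (Dv uu f) q
      = (q.2 ^ 2)⁻¹ * (-(ℓ : ℝ) * ((ℓ : ℝ) + 1) * f q - s q)) :
    ∀ k, ∀ q ∈ U,
      Dv ww (fun p => (p.2 ^ (2 * k))⁻¹ * Dv uu (Est^[k] f) p) q
        = (q.2 ^ (2 * k + 2))⁻¹ * (((k : ℝ) * ((k : ℝ) + 1) - (ℓ : ℝ) * ((ℓ : ℝ) + 1))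
            * Est^[k] f q - Est^[k] s q) := by
  intro k
  induction k with
  | zero =>
    intro q hq
    have h0 : (fun p : ℝ × ℝ => (p.2 ^ (2 * 0))⁻¹ * Dv uu (Est^[0] f) p) = Dv uu f := by
      funext p; simp
    rw [h0, heq q hq]
    norm_num
  | succ k IH =>
    intro q hq
    have hq2 : q.2 ≠ 0 := ne_of_gt hq
    have hFs : Sm (Est^[k] f) := hf.estIter k
    have hSs : Sm (Est^[k] s) := hs.estIter k
    have hDuF : Sm (Dv uu (Est^[k] f)) := hFs.dv uu
    set F : ℝ × ℝ → ℝ := Est^[k] f with hFdef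
    set S' : ℝ × ℝ → ℝ := Est^[k] s with hSdef
    set Qk : ℝ × ℝ → ℝ := fun p => (p.2 ^ (2 * k))⁻¹ * Dv uu F p with hQkdef
    have hQ : Sm Qk := (Sm_invpow_snd (2 * k)).mul hDuF
    set c : ℝ := (k : ℝ) * ((k : ℝ) + 1) - (ℓ : ℝ) * ((ℓ : ℝ) + 1) with hcdef
    -- Step A : the level-(k+1) quantity equals Dv uu Qk + (2k+2) ρ⁻¹ Qk on U
    have stepA : Set.EqOn (fun p => (p.2 ^ (2 * (k + 1)))⁻¹ * Dv uu (Est^[k+1] f) p)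
        (fun p => Dv uu Qk p + ((2 * (k : ℝ) + 2) * (p.2 ^ 1)⁻¹) * Qk p) U := by
      intro p hp
      have hp2 : p.2 ≠ 0 := ne_of_gt hp
      have h1 : Est^[k+1] f = Est F := by rw [Function.iterate_succ_apply']
      have h2 : Dv uu (Est F) p
          = 2 * p.2 ^ (2 - 1) * uu.2 * Dv uu F p + p.2 ^ 2 * Dv uu (Dv uu F) p := by
        show Dv uu (fun p => p.2 ^ 2 * Dv uu F p) p = _
        rw [Dv_mul (diffAt_pow_snd 2 p) (hDuF.diffAt hp), Dv_pow_snd]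
        norm_num
      have h3 : Dv uu Qk p
          = (-(2 * k : ℝ) * (p.2 ^ (2 * k + 1))⁻¹ * uu.2) * Dv uu F p
            + (p.2 ^ (2 * k))⁻¹ * Dv uu (Dv uu F) p := by
        rw [hQkdef]
        rw [Dv_mul (diffAt_invpow_snd (2 * k) hp2) (hDuF.diffAt hp), Dv_invpow_snd _ _ hp2]
        push_cast
        ring
      simp only [h1, h2, h3]
      simp only [hQkdef]
      have e1 : uu.2 = 1 := rfl
      rw [e1]
      have hne1 : p.2 ^ (2 * k) ≠ 0 := pow_ne_zero _ hp2
      have hne2 : p.2 ^ (2 * k + 1) ≠ 0 := pow_ne_zero _ hp2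
      have hne3 : p.2 ^ (2 * (k + 1)) ≠ 0 := pow_ne_zero _ hp2
      field_simp
      ring
    have hbdiff : Sm (fun p => ((2 * (k : ℝ) + 2) * (p.2 ^ 1)⁻¹) * Qk p) :=
      (contDiffOn_const.mul (Sm_invpow_snd 1)).mul hQ
    -- Step B+C : differentiate
    have stepB : Dv ww (fun p => (p.2 ^ (2 * (k + 1)))⁻¹ * Dv uu (Est^[k+1] f) p) q
        = Dv ww (Dv uu Qk) q
          + Dv ww (fun p => ((2 * (k : ℝ) + 2) * (p.2 ^ 1)⁻¹) * Qk p) q := by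
      rw [Dv_congr stepA ww hq]
      exact Dv_add ((hQ.dv uu).diffAt hq) (hbdiff.diffAt hq) ww
    -- Step D : commute and use IH
    set R : ℝ × ℝ → ℝ := fun p => (p.2 ^ (2 * k + 2))⁻¹ * (c * F p - S' p) with hRdef
    have hIHEq : Set.EqOn (Dv ww Qk) R U := fun p hp => IH p hp
    have stepD : Dv ww (Dv uu Qk) q
        = -(2 * (k : ℝ) + 2) * (q.2 ^ (2 * k + 3))⁻¹ * (c * F q - S' q)
          + (q.2 ^ (2 * k + 2))⁻¹ * (c * Dv uu F q - Dv uu S' q) := by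
      rw [Dv_comm hQ hq ww uu, Dv_congr hIHEq uu hq, hRdef]
      rw [Dv_mul (diffAt_invpow_snd (2 * k + 2) hq2)
        (((hFs.diffAt hq).const_mul c).fun_sub (hSs.diffAt hq)) uu,
        Dv_invpow_snd _ _ hq2, Dv_cmul_sub c (hFs.diffAt hq) (hSs.diffAt hq) uu]
      have e1 : uu.2 = 1 := rfl
      rw [e1]
      push_cast
      ring_nf
    -- Step E : the lower-order term
    have stepE : Dv ww (fun p => ((2 * (k : ℝ) + 2) * (p.2 ^ 1)⁻¹) * Qk p) q
        = ((2 * (k : ℝ) + 2) * (q.2 ^ 2)⁻¹) * Qk q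
          + ((2 * (k : ℝ) + 2) * (q.2 ^ 1)⁻¹) * ((q.2 ^ (2 * k + 2))⁻¹ * (c * F q - S' q)) := by
      rw [Dv_mul ((diffAt_invpow_snd 1 hq2).const_mul _) (hQ.diffAt hq) ww,
        Dv_cmul _ (diffAt_invpow_snd 1 hq2), Dv_invpow_snd _ _ hq2, hIHEq hq]
      have e2 : ww.2 = -1 := rfl
      rw [e2, hRdef]
      push_cast
      ring_nf
    -- assemble
    rw [stepB, stepD, stepE]
    have h1 : Est^[k+1] f = Est F := by rw [Function.iterate_succ_apply']
    have h2 : Est^[k+1] s = Est S' := by rw [Function.iterate_succ_apply']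
    rw [h1, h2]
    simp only [hQkdef, hcdef, Est]
    push_cast
    field_simp
    ring

lemma deriv_fst_eq {g : ℝ × ℝ → ℝ} {q : ℝ × ℝ} (hd : DifferentiableAt ℝ g q) :
    deriv (fun t' => g (t', q.2)) q.1 = fderiv ℝ g q (1, 0) := by
  have hin : HasFDerivAt (fun t' : ℝ => ((t', q.2) : ℝ × ℝ))
      ((ContinuousLinearMap.id ℝ ℝ).prod 0) q.1 :=
    HasFDerivAt.prodMk (hasFDerivAt_id q.1) (hasFDerivAt_const q.2 q.1)
  have h : HasFDerivAt (fun t' => g (t', q.2))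
      ((fderiv ℝ g q).comp ((ContinuousLinearMap.id ℝ ℝ).prod 0)) q.1 :=
    hd.hasFDerivAt.comp q.1 hin
  rw [h.hasDerivAt.deriv]
  simp

lemma deriv_snd_eq {g : ℝ × ℝ → ℝ} {q : ℝ × ℝ} (hd : DifferentiableAt ℝ g q) :
    deriv (fun r' => g (q.1, r')) q.2 = fderiv ℝ g q (0, 1) := by
  have hin : HasFDerivAt (fun r' : ℝ => ((q.1, r') : ℝ × ℝ))
      ((0 : ℝ →L[ℝ] ℝ).prod (ContinuousLinearMap.id ℝ ℝ)) q.2 :=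
    HasFDerivAt.prodMk (hasFDerivAt_const q.1 q.2) (hasFDerivAt_id q.2)
  have h : HasFDerivAt (fun r' => g (q.1, r'))
      ((fderiv ℝ g q).comp ((0 : ℝ →L[ℝ] ℝ).prod (ContinuousLinearMap.id ℝ ℝ))) q.2 :=
    hd.hasFDerivAt.comp q.2 hin
  rw [h.hasDerivAt.deriv]
  simp

lemma Lop_eq {ψ : ℝ → ℝ → ℝ} {g : ℝ × ℝ → ℝ}
    (hg : Set.EqOn (fun q : ℝ × ℝ => ψ q.1 q.2) g U) {t r : ℝ}
    (hd : DifferentiableAt ℝ g (t, r)) (hr : 0 < r) :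
    Lop ψ t r = Dv uu g (t, r) := by
  have h1 : (fun t' => ψ t' r) = fun t' => g (t', r) :=
    funext fun t' => hg (show ((t', r) : ℝ × ℝ) ∈ U from hr)
  have h2 : (ψ t) =ᶠ[nhds r] fun r' => g (t, r') := by
    filter_upwards [lt_mem_nhds hr] with r' hr'
    exact hg (show ((t, r') : ℝ × ℝ) ∈ U from hr')
  show deriv (fun t' => ψ t' r) t + deriv (ψ t) r = _
  rw [h1, h2.deriv_eq, deriv_fst_eq hd, deriv_snd_eq hd]
  show _ = fderiv ℝ g (t, r) uu
  have huu : uu = (1, 0) + (0, 1) := by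
    simp [uu, Prod.ext_iff]
  rw [huu, map_add]

lemma Lbar_eq {ψ : ℝ → ℝ → ℝ} {g : ℝ × ℝ → ℝ}
    (hg : Set.EqOn (fun q : ℝ × ℝ => ψ q.1 q.2) g U) {t r : ℝ}
    (hd : DifferentiableAt ℝ g (t, r)) (hr : 0 < r) :
    Lbar ψ t r = Dv ww g (t, r) := by
  have h1 : (fun t' => ψ t' r) = fun t' => g (t', r) :=
    funext fun t' => hg (show ((t', r) : ℝ × ℝ) ∈ U from hr)
  have h2 : (ψ t) =ᶠ[nhds r] fun r' => g (t, r') := by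
    filter_upwards [lt_mem_nhds hr] with r' hr'
    exact hg (show ((t, r') : ℝ × ℝ) ∈ U from hr')
  show deriv (fun t' => ψ t' r) t - deriv (ψ t) r = _
  rw [h1, h2.deriv_eq, deriv_fst_eq hd, deriv_snd_eq hd]
  show _ = fderiv ℝ g (t, r) ww
  have hww : ww = (1, 0) - (0, 1) := by
    simp [ww, Prod.ext_iff]
  rw [hww, map_sub]

lemma iter_eqOn {ψ : ℝ → ℝ → ℝ} {g : ℝ × ℝ → ℝ} (hg : Sm g)
    (h : Set.EqOn (fun q : ℝ × ℝ => ψ q.1 q.2) g U) :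
    ∀ k, Set.EqOn (fun q : ℝ × ℝ => (Eop^[k] ψ) q.1 q.2) (Est^[k] g) U
  | 0 => h
  | (k + 1) => by
    intro q hq
    have hq' : (0 : ℝ) < q.2 := hq
    simp only [Function.iterate_succ_apply']
    show q.2 ^ 2 * Lop (Eop^[k] ψ) q.1 q.2 = q.2 ^ 2 * Dv uu (Est^[k] g) q
    rw [Lop_eq (iter_eqOn hg h k) ((hg.estIter k).diffAt hq) hq']

end NPaux

/-- Exact conservation law underlying the Newman–Penrose constants for the spin-0 field:
if `φ` satisfies the `ℓ`-mode wave equation `L̲Lφ = r⁻²(-ℓ(ℓ+1)φ - S)` on `{r > 0}`, then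
`L̲(r^{-2ℓ} L E^ℓ φ) = -r^{-2(ℓ+1)} E^ℓ S` on `{r > 0}`; in particular, in the
source-free case `S = 0` the quantity `r^{-2ℓ} L E^ℓ φ` is annihilated by `L̲`. -/
theorem NP_conservation_law
    (ℓ : ℕ) (φ S : ℝ → ℝ → ℝ)
    (hφ : ContDiffOn ℝ (⊤ : ℕ∞) (fun q : ℝ × ℝ => φ q.1 q.2) {q : ℝ × ℝ | 0 < q.2})
    (hS : ContDiffOn ℝ (⊤ : ℕ∞) (fun q : ℝ × ℝ => S q.1 q.2) {q : ℝ × ℝ | 0 < q.2})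
    (hwave : ∀ t r : ℝ, 0 < r →
      Lbar (Lop φ) t r = (r ^ 2)⁻¹ * (-(ℓ : ℝ) * ((ℓ : ℝ) + 1) * φ t r - S t r)) :
    (∀ t r : ℝ, 0 < r →
      Lbar (fun t' r' => (r' ^ (2 * ℓ))⁻¹ * Lop (Eop^[ℓ] φ) t' r') t r
        = -(r ^ (2 * (ℓ + 1)))⁻¹ * (Eop^[ℓ] S) t r)
    ∧ (S = (fun _ _ => 0) → ∀ t r : ℝ, 0 < r →
        Lbar (fun t' r' => (r' ^ (2 * ℓ))⁻¹ * Lop (Eop^[ℓ] φ) t' r') t r = 0) := by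
  have hf : NPaux.Sm (fun q : ℝ × ℝ => φ q.1 q.2) := hφ
  have hs : NPaux.Sm (fun q : ℝ × ℝ => S q.1 q.2) := hS
  set f : ℝ × ℝ → ℝ := fun q : ℝ × ℝ => φ q.1 q.2 with hfdef
  set s : ℝ × ℝ → ℝ := fun q : ℝ × ℝ => S q.1 q.2 with hsdef
  have heq : ∀ q ∈ NPaux.U, NPaux.Dv NPaux.ww (NPaux.Dv NPaux.uu f) q
      = (q.2 ^ 2)⁻¹ * (-(ℓ : ℝ) * ((ℓ : ℝ) + 1) * f q - s q) := by
    intro q hq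
    have hq' : (0 : ℝ) < q.2 := hq
    have h1 : Set.EqOn (fun p : ℝ × ℝ => Lop φ p.1 p.2) (NPaux.Dv NPaux.uu f) NPaux.U :=
      fun p hp => NPaux.Lop_eq (fun _ _ => rfl) (hf.diffAt hp) hp
    have h2 := NPaux.Lbar_eq (ψ := Lop φ) h1 (((hf.dv NPaux.uu)).diffAt hq) hq'
    have h3 : Lbar (Lop φ) q.1 q.2 = NPaux.Dv NPaux.ww (NPaux.Dv NPaux.uu f) q := h2
    rw [← h3, hwave q.1 q.2 hq']
  have main : ∀ t r : ℝ, 0 < r →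
      Lbar (fun t' r' => (r' ^ (2 * ℓ))⁻¹ * Lop (Eop^[ℓ] φ) t' r') t r
        = -(r ^ (2 * (ℓ + 1)))⁻¹ * (Eop^[ℓ] S) t r := by
    intro t r hr
    have hq : ((t, r) : ℝ × ℝ) ∈ NPaux.U := hr
    have hFl : NPaux.Sm (NPaux.Est^[ℓ] f) := hf.estIter ℓ
    have hQl : NPaux.Sm (fun p : ℝ × ℝ =>
        (p.2 ^ (2 * ℓ))⁻¹ * NPaux.Dv NPaux.uu (NPaux.Est^[ℓ] f) p) :=
      (NPaux.Sm_invpow_snd (2 * ℓ)).mul (hFl.dv NPaux.uu)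
    have hiter := NPaux.iter_eqOn hf (fun _ _ => rfl) ℓ
    have hitS := NPaux.iter_eqOn hs (fun _ _ => rfl) ℓ
    have hEq : Set.EqOn
        (fun p : ℝ × ℝ => (p.2 ^ (2 * ℓ))⁻¹ * Lop (Eop^[ℓ] φ) p.1 p.2)
        (fun p : ℝ × ℝ => (p.2 ^ (2 * ℓ))⁻¹ * NPaux.Dv NPaux.uu (NPaux.Est^[ℓ] f) p)
        NPaux.U := by
      intro p hp
      have hp' : (0 : ℝ) < p.2 := hp
      show (p.2 ^ (2 * ℓ))⁻¹ * Lop (Eop^[ℓ] φ) p.1 p.2 = _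
      rw [NPaux.Lop_eq hiter (hFl.diffAt hp) hp']
    have hL := NPaux.Lbar_eq
      (ψ := fun t' r' => (r' ^ (2 * ℓ))⁻¹ * Lop (Eop^[ℓ] φ) t' r') hEq
      (hQl.diffAt hq) hr
    rw [hL, NPaux.key ℓ f s hf hs heq ℓ (t, r) hq]
    have hS2 : (Eop^[ℓ] S) t r = NPaux.Est^[ℓ] s (t, r) := hitS hq
    rw [hS2]
    have he : 2 * (ℓ + 1) = 2 * ℓ + 2 := by ring
    rw [he]
    ring
  refine ⟨main, fun h0 t r hr => ?_⟩
  have hz : Eop (fun _ _ => (0 : ℝ)) = fun _ _ => 0 := by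
    funext t' r'
    simp [Eop, Lop]
  rw [main t r hr, h0, Function.iterate_fixed hz]
  simp
end
end
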